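/- arXiv:1901.01372 — 11 statements merged into one kernel-verified Lean document; each statement's English description precedes it below -/
import Mathlib

section
/- If G' is the underlying simple graph of a multigraph G (obtained by deleting all but one of each set of parallel edges, with no loops present), then md(G) = md(G'). -/
open SimpleGraph

/-- An edge-coloring `Γ` is a monochromatic disconnection coloring (MD-coloring) of `G`
if every pair of distinct vertices is separated by a monochromatic edge-cut. -/
def IsMDColoring {V : Type*} (G : SimpleGraph V) (Γ : Sym2 V → ℕ) : Prop :=
  ∀ u v : V, u ≠ v → ∃ (c : ℕ) (F : Set (Sym2 V)), F ⊆ G.edgeSet ∧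
    (∀ e ∈ F, Γ e = c) ∧ ¬ (G.deleteEdges F).Reachable u v

/-- The monochromatic disconnection number of `G`: the maximum number of colors
used by an MD-coloring of `G`. -/
noncomputable def md {V : Type*} (G : SimpleGraph V) : ℕ :=
  sSup {n : ℕ | ∃ Γ : Sym2 V → ℕ, IsMDColoring G Γ ∧ (Γ '' G.edgeSet).ncard = n}

/-- A multigraph without loops: an edge type with an endpoints map avoiding loops. -/
structure Multigraph (V : Type*) where
  E : Type*
  ends : E → Sym2 V
  no_loops : ∀ e, ¬ (ends e).IsDiag

/-- The underlying simple graph of a multigraph: keep one copy of each parallel class. -/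
def Multigraph.underlying {V : Type*} (M : Multigraph V) : SimpleGraph V where
  Adj u v := u ≠ v ∧ ∃ e, M.ends e = s(u, v)
  symm := ⟨by
    rintro u v ⟨h, e, he⟩
    exact ⟨h.symm, e, by rw [he, Sym2.eq_swap]⟩⟩
  loopless := ⟨fun v h => h.1 rfl⟩

/-- An MD-coloring of a multigraph: every pair of distinct vertices is separated by a
monochromatic edge-cut (a set of edge instances of one color). -/
def Multigraph.IsMDColoring {V : Type*} (M : Multigraph V) (Γ : M.E → ℕ) : Prop :=
  ∀ u v : V, u ≠ v → ∃ (c : ℕ) (F : Set M.E), (∀ e ∈ F, Γ e = c) ∧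
    ¬ (SimpleGraph.fromEdgeSet (M.ends '' {e | e ∉ F})).Reachable u v

/-- The monochromatic disconnection number of a multigraph. -/
noncomputable def Multigraph.md {V : Type*} (M : Multigraph V) : ℕ :=
  sSup {n : ℕ | ∃ Γ : M.E → ℕ, M.IsMDColoring Γ ∧ (Set.range Γ).ncard = n}

/-!
A monochromatic cut separating the ends `a, b` of an edge contains every edge parallel to it,
so parallel edges of an MD-coloring of a multigraph share their color, and the coloring is
the pull-back `Γ ∘ ends` of a coloring `Γ` of the underlying simple graph. Conversely, cuts of
the simple graph and parallel-closed cuts of the multigraph correspond under `ends`, so `Γ ∘ ends`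
is an MD-coloring exactly when `Γ` is, and both use the same set of colors.
-/

namespace Multigraph

variable {V : Type*} (M : Multigraph V)

theorem ends_mem_underlying_edgeSet (e : M.E) : M.ends e ∈ M.underlying.edgeSet := by
  induction h : M.ends e using Sym2.ind with
  | h a b =>
    have hab : a ≠ b := fun hab => M.no_loops e (by rw [h, Sym2.mk_isDiag_iff]; exact hab)
    exact ⟨hab, e, h⟩

theorem underlying_edgeSet_eq_range : M.underlying.edgeSet = Set.range M.ends := by
  refine subset_antisymm (fun p hp => ?_) (Set.range_subset_iff.2 M.ends_mem_underlying_edgeSet)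
  induction p using Sym2.ind with
  | h a b => exact hp.2

theorem fromEdgeSet_image_ends_eq_deleteEdges (S : Set (Sym2 V)) :
    fromEdgeSet (M.ends '' (M.ends ⁻¹' S)ᶜ) = M.underlying.deleteEdges S := by
  rw [Set.image_compl_preimage, ← underlying_edgeSet_eq_range, ← edgeSet_deleteEdges,
    fromEdgeSet_edgeSet]

theorem mem_of_not_reachable {F : Set M.E} {a b : V}
    (hF : ¬ (fromEdgeSet (M.ends '' {e | e ∉ F})).Reachable a b)
    {e : M.E} (he : M.ends e = s(a, b)) : e ∈ F := by
  by_contra heF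
  have hab := M.ends_mem_underlying_edgeSet e
  rw [he, mem_edgeSet] at hab
  exact hF (Adj.reachable ((fromEdgeSet_adj _).2 ⟨⟨e, heF, he⟩, hab.1⟩))

variable {M}

theorem IsMDColoring.factorsThrough {Γ : M.E → ℕ} (hΓ : M.IsMDColoring Γ) :
    Γ.FactorsThrough M.ends := by
  intro e₁ e₂ h
  have hadj := M.ends_mem_underlying_edgeSet e₁
  induction hab : M.ends e₁ using Sym2.ind with
  | h a b =>
    rw [hab, mem_edgeSet] at hadj
    obtain ⟨c, F, hmono, hF⟩ := hΓ a b hadj.1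
    rw [hmono e₁ (M.mem_of_not_reachable hF hab), hmono e₂ (M.mem_of_not_reachable hF (h ▸ hab))]

theorem isMDColoring_comp_ends_iff (Γ : Sym2 V → ℕ) :
    M.IsMDColoring (Γ ∘ M.ends) ↔ _root_.IsMDColoring M.underlying Γ := by
  constructor
  · intro hΓ u v huv
    obtain ⟨c, F, hmono, hF⟩ := hΓ u v huv
    refine ⟨c, M.ends '' F, ?_, ?_, fun hr => hF (hr.mono ?_)⟩
    · rintro _ ⟨e, -, rfl⟩
      exact M.ends_mem_underlying_edgeSet e
    · rintro _ ⟨e, he, rfl⟩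
      exact hmono e he
    · rw [← fromEdgeSet_image_ends_eq_deleteEdges]
      exact fromEdgeSet_mono (Set.image_mono fun e he heF => he ⟨e, heF, rfl⟩)
  · intro hΓ u v huv
    obtain ⟨c, S, -, hmono, hS⟩ := hΓ u v huv
    rw [← fromEdgeSet_image_ends_eq_deleteEdges] at hS
    exact ⟨c, M.ends ⁻¹' S, fun e he => hmono _ he, hS⟩

theorem ncard_range_comp_ends (Γ : Sym2 V → ℕ) :
    (Set.range (Γ ∘ M.ends)).ncard = (Γ '' M.underlying.edgeSet).ncard := by
  rw [underlying_edgeSet_eq_range, Set.range_comp]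

end Multigraph

theorem stmt_0_general {V : Type*} (M : Multigraph V) :
    M.md = md M.underlying := by
  unfold Multigraph.md md
  congr 1
  ext n
  constructor
  · rintro ⟨Γ, hΓ, rfl⟩
    have hcomp := hΓ.factorsThrough.extend_comp (0 : Sym2 V → ℕ)
    refine ⟨Function.extend M.ends Γ 0, ?_, ?_⟩
    · rwa [← M.isMDColoring_comp_ends_iff, hcomp]
    · rw [← M.ncard_range_comp_ends, hcomp]
  · rintro ⟨Γ, hΓ, rfl⟩
    exact ⟨Γ ∘ M.ends, (M.isMDColoring_comp_ends_iff Γ).2 hΓ, M.ncard_range_comp_ends Γ⟩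

theorem stmt_0 {V : Type*} [Fintype V] (M : Multigraph V) [Fintype M.E] :
    M.md = md M.underlying :=
  stmt_0_general M
end

section
/- If a connected graph G has blocks B_1, ..., B_r, then md(G) = \sum_{i=1}^r md(B_i). -/
/-!
Lying on a common cycle is a transitive relation on edges: if `g` is not on a cycle `c₁`
through `e` and `f`, then a cycle through `f` and `g` contains an ear of `c₁` passing
through `g`, and the ear closes up with one of the two arcs of `c₁` into a cycle through
`e` and `g`. So the blocks are the classes of this relation. A path between two vertices
of a block never leaves it: leaving along an outside edge and returning would close a
cycle through that edge and a block edge. Hence a cut inside a block separates in `G`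
every pair it separates in the block, so MD-colorings of the blocks with disjoint
palettes combine into an MD-coloring of `G`. Conversely an MD-coloring of `G` restricts
to an MD-coloring of every block, and its colors are the union of the blocks' colors.
-/

open SimpleGraph

/-- The block of `G` containing the edge `e`: the subgraph formed by `e` together with
all edges lying on a common cycle with . -/
def blockOf {V : Type*} (G : SimpleGraph V) (e : Sym2 V) : SimpleGraph V :=
  SimpleGraph.fromEdgeSet
    {f | f = e ∨ ∃ (v : V) (w : G.Walk v v), w.IsCycle ∧ e ∈ w.edges ∧ f ∈ w.edges}

namespace SimpleGraph

variable {V : Type*} {G : SimpleGraph V}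

namespace Walk

variable {u v w : V}

lemma IsCycle.append_comm {p : G.Walk u v} {q : G.Walk v u} (h : (p.append q).IsCycle) :
    (q.append p).IsCycle := by
  rw [isCycle_def, isTrail_def, edges_append, tail_support_append] at h ⊢
  obtain ⟨hedges, hne, hsupp⟩ := h
  refine ⟨List.perm_append_comm.nodup_iff.1 hedges, ?_, List.perm_append_comm.nodup_iff.1 hsupp⟩
  rw [ne_eq, eq_nil_iff_nil, nil_append_iff] at hne ⊢
  tauto

lemma exists_eq_append_cons_of_mem_edges {p : G.Walk u v} {e : Sym2 V} (he : e ∈ p.edges) :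
    ∃ (x y : V) (h : G.Adj x y) (q : G.Walk u x) (r : G.Walk y v),
      e = s(x, y) ∧ p = q.append (cons h r) := by
  obtain ⟨d, hd, rfl⟩ := List.mem_map.1 he
  obtain ⟨q, r, hqr⟩ := (isSubwalk_toWalk_adj_iff_mem_darts p).2 hd
  exact ⟨_, _, d.adj, q, r, rfl, by rw [hqr, ← append_assoc]; rfl⟩

lemma IsCycle.exists_isCycle_cons {c : G.Walk v v} (hc : c.IsCycle) {e : Sym2 V}
    (he : e ∈ c.edges) :
    ∃ (x y : V) (h : G.Adj x y) (p : G.Walk y x),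
      e = s(x, y) ∧ (cons h p).IsCycle ∧ c.edges ⊆ (cons h p).edges := by
  obtain ⟨x, y, h, q, r, rfl, rfl⟩ := exists_eq_append_cons_of_mem_edges he
  refine ⟨x, y, h, r.append q, rfl, by simpa [cons_append] using hc.append_comm, ?_⟩
  intro f
  simp only [edges_append, edges_cons, List.mem_append, List.mem_cons]
  tauto

lemma exists_eq_append_of_end_mem {s : Set V} (p : G.Walk u v) (hv : v ∈ s) :
    ∃ (w : V) (q : G.Walk u w) (r : G.Walk w v),
      w ∈ s ∧ p = q.append r ∧ ∀ x ∈ q.support, x ∈ s → x = w := by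
  induction p with
  | nil => exact ⟨_, nil, nil, hv, rfl, by simp⟩
  | @cons u u' v h p ih =>
    by_cases hu : u ∈ s
    · exact ⟨u, nil, cons h p, hu, rfl, by simp⟩
    obtain ⟨w, q, r, hw, rfl, hq⟩ := ih hv
    refine ⟨w, cons h q, r, hw, rfl, ?_⟩
    rintro x hx hxs
    rcases List.mem_cons.1 (support_cons h q ▸ hx) with rfl | hx
    · exact absurd hxs hu
    · exact hq x hx hxs

lemma notMem_edgeSet_of_forall_mem_support {H : SimpleGraph V} {q : G.Walk u w}
    (hq : ∀ x ∈ q.support, x ∈ H.support → x = w) {e : Sym2 V} (he : e ∈ q.edges) :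
    e ∉ H.edgeSet := by
  induction e using Sym2.ind with
  | _ x y =>
  intro hxy
  rw [SimpleGraph.mem_edgeSet] at hxy
  have hx := hq x (q.fst_mem_support_of_mem_edges he) hxy.left_mem_support
  have hy := hq y (q.snd_mem_support_of_mem_edges he) hxy.right_mem_support
  exact hxy.ne (hx.trans hy.symm)

lemma IsPath.start_notMem_support_tail {p : G.Walk u v} (hp : p.IsPath) :
    u ∉ p.support.tail := by
  have := hp.support_nodup
  rw [← cons_tail_support] at this
  exact (List.nodup_cons.1 this).1

lemma IsPath.isCycle_append_of_mem_edges {p : G.Walk u v} {q : G.Walk v u} (hp : p.IsPath)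
    (hq : q.IsPath) (hpq : ∀ x ∈ p.support, x ∈ q.support → x = u ∨ x = v) {e : Sym2 V}
    (hep : e ∈ p.edges) (heq : e ∉ q.edges) : (p.append q).IsCycle := by
  refine hp.isCycle_append hq (fun x hxp hxq => ?_) ?_
  · rcases hpq x (List.mem_of_mem_tail hxp) (List.mem_of_mem_tail hxq) with rfl | rfl
    · exact hp.start_notMem_support_tail hxp
    · exact hq.start_notMem_support_tail hxq
  · by_contra! hlen
    have hpq : p = q.reverse := eq_of_length_le_one hlen.1 (by simpa using hlen.2)
    exact heq (by simpa [hpq] using hep)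

end Walk

open Walk

def OnCommonCycle (G : SimpleGraph V) (e f : Sym2 V) : Prop :=
  ∃ (v : V) (c : G.Walk v v), c.IsCycle ∧ e ∈ c.edges ∧ f ∈ c.edges

lemma OnCommonCycle.symm {e f : Sym2 V} (h : G.OnCommonCycle e f) : G.OnCommonCycle f e :=
  let ⟨v, c, hc, he, hf⟩ := h
  ⟨v, c, hc, hf, he⟩

lemma Walk.IsCycle.onCommonCycle_of_isPath {v a b : V} {c : G.Walk v v} (hc : c.IsCycle)
    {e : Sym2 V} (he : e ∈ c.edges) {p : G.Walk a b} (hp : p.IsPath) (ha : a ∈ c.support)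
    (hb : b ∈ c.support) (hpc : ∀ x ∈ p.support, x ∈ c.support → x = a ∨ x = b)
    {f : Sym2 V} (hfp : f ∈ p.edges) (hfc : f ∉ c.edges) : G.OnCommonCycle e f := by
  classical
  have hab : a ≠ b := by
    rintro rfl
    simp [isPath_iff_nil.1 hp |>.eq_nil] at hfp
  set c' := c.rotate a ha
  have hc' : c'.IsCycle := hc.rotate ha
  have hb' : b ∈ c'.support := (mem_support_rotate_iff c a ha).2 hb
  have hsplit := c'.take_spec hb'
  set t := c'.takeUntil b hb'
  set d := c'.dropUntil b hb'
  have ht : t.IsPath := hc'.isPath_takeUntil hb'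
  have hd : d.IsPath := (hsplit ▸ hc').isPath_of_append_right (not_nil_of_ne hab)
  have hte : ∀ g ∈ t.edges, g ∈ c.edges := fun g hg =>
    (c.rotate_edges a ha).mem_iff.1 (c'.edges_takeUntil_subset_edges hb' hg)
  have hde : ∀ g ∈ d.edges, g ∈ c.edges := fun g hg =>
    (c.rotate_edges a ha).mem_iff.1 (c'.edges_dropUntil_subset_edges hb' hg)
  have hts : ∀ x ∈ t.support, x ∈ c.support := fun x hx =>
    (mem_support_rotate_iff c a ha).1 (c'.support_takeUntil_subset_support hb' hx)
  have hds : ∀ x ∈ d.support, x ∈ c.support := fun x hx =>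
    (mem_support_rotate_iff c a ha).1 (c'.support_dropUntil_subset_support hb' hx)
  have he' : e ∈ t.edges ++ d.edges := by
    rw [← edges_append, hsplit]; exact (c.rotate_edges a ha).mem_iff.2 he
  rcases List.mem_append.1 he' with het | hed
  · refine ⟨b, _, hp.reverse.isCycle_append_of_mem_edges ht ?_ (e := f) (by simpa using hfp)
      (fun h => hfc (hte f h)), by simp [het], by simp [hfp]⟩
    intro x hx hxt
    rw [support_reverse, List.mem_reverse] at hx
    exact (hpc x hx (hts x hxt)).symm
  · refine ⟨a, _, hp.isCycle_append_of_mem_edges hd (fun x hx hxd => hpc x hx (hds x hxd)) hfp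
      (fun h => hfc (hde f h)), by simp [hed], by simp [hfp]⟩

lemma OnCommonCycle.trans {e f g : Sym2 V} (hef : G.OnCommonCycle e f)
    (hfg : G.OnCommonCycle f g) : G.OnCommonCycle e g := by
  obtain ⟨v₁, c₁, hc₁, he₁, hf₁⟩ := hef
  by_cases hg₁ : g ∈ c₁.edges
  · exact ⟨v₁, c₁, hc₁, he₁, hg₁⟩
  obtain ⟨v₂, c₂, hc₂, hf₂, hg₂⟩ := hfg
  obtain ⟨x, y, hxy, r, rfl, hcyc, hsub⟩ := hc₂.exists_isCycle_cons hf₂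
  have hr : r.IsPath := ((cons_isCycle_iff r hxy).1 hcyc).1
  have hgr : g ∈ r.edges := by
    rcases List.mem_cons.1 (hsub hg₂) with rfl | h
    · exact absurd hf₁ hg₁
    · exact h
  obtain ⟨a, b, hab, A, B, rfl, rfl⟩ := exists_eq_append_cons_of_mem_edges hgr
  have hx : x ∈ c₁.support := c₁.fst_mem_support_of_mem_edges hf₁
  have hy : y ∈ c₁.support := c₁.snd_mem_support_of_mem_edges hf₁
  -- The ear: the stretch of `r` through `g` from its last vertex on `c₁` before `g`
  -- to its first one after `g`.
  obtain ⟨p, B₁, B₂, hp, rfl, hB₁⟩ :=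
    exists_eq_append_of_end_mem (s := {z | z ∈ c₁.support}) B hx
  obtain ⟨q, A₁, A₂, hq, hA, hA₁⟩ :=
    exists_eq_append_of_end_mem (s := {z | z ∈ c₁.support}) A.reverse hy
  have hear : (A₁.reverse.append (cons hab B₁)).IsPath := by
    have : A.append (cons hab (B₁.append B₂)) =
        A₂.reverse.append ((A₁.reverse.append (cons hab B₁)).append B₂) := by
      rw [← reverse_reverse A, hA]
      simp [reverse_append, ← append_assoc, cons_append]
    rw [this] at hr
    exact hr.of_append_right.of_append_left
  refine hc₁.onCommonCycle_of_isPath he₁ hear hq hp ?_ (by simp) hg₁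
  intro z hz hzc
  rw [mem_support_append_iff, support_reverse, List.mem_reverse, support_cons,
    List.mem_cons] at hz
  rcases hz with hz | rfl | hz
  · exact .inl (hA₁ z hz hzc)
  · exact .inl (hA₁ z A₁.start_mem_support hzc)
  · exact .inr (hB₁ z hz hzc)

section blockOf

variable {e f : Sym2 V}

lemma mem_edgeSet_blockOf (he : e ∈ G.edgeSet) :
    f ∈ (blockOf G e).edgeSet ↔ f = e ∨ G.OnCommonCycle e f := by
  rw [blockOf, edgeSet_fromEdgeSet]
  refine ⟨fun hf => hf.1, fun hf => ⟨hf, ?_⟩⟩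
  rcases hf with rfl | ⟨v, c, -, -, hf⟩
  · exact G.not_isDiag_of_mem_edgeSet he
  · exact G.not_isDiag_of_mem_edgeSet (c.edges_subset_edgeSet hf)

lemma blockOf_le (he : e ∈ G.edgeSet) : blockOf G e ≤ G := by
  refine edgeSet_subset_edgeSet.1 fun f hf => ?_
  rcases (mem_edgeSet_blockOf he).1 hf with rfl | ⟨v, c, -, -, hf⟩
  · exact he
  · exact c.edges_subset_edgeSet hf

lemma mem_edgeSet_blockOf_of_onCommonCycle {g : Sym2 V} (he : e ∈ G.edgeSet)
    (hf : f ∈ (blockOf G e).edgeSet) (hfg : G.OnCommonCycle f g) :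
    g ∈ (blockOf G e).edgeSet := by
  rw [mem_edgeSet_blockOf he] at hf ⊢
  rcases hf with rfl | hef
  · exact .inr hfg
  · exact .inr (hef.trans hfg)

lemma blockOf_eq_of_mem_edgeSet (he : e ∈ G.edgeSet) (hf : f ∈ (blockOf G e).edgeSet) :
    blockOf G f = blockOf G e := by
  have hfG : f ∈ G.edgeSet := edgeSet_mono (blockOf_le he) hf
  have hef : f = e ∨ G.OnCommonCycle e f := (mem_edgeSet_blockOf he).1 hf
  rw [← edgeSet_inj]
  ext g
  rw [mem_edgeSet_blockOf hfG]
  constructor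
  · rintro (rfl | hfg)
    · exact hf
    · exact mem_edgeSet_blockOf_of_onCommonCycle he hf hfg
  · intro hg
    rcases hef with rfl | hef
    · exact (mem_edgeSet_blockOf he).1 hg
    · rcases (mem_edgeSet_blockOf he).1 hg with rfl | heg
      · exact .inr hef.symm
      · exact .inr (hef.symm.trans heg)

lemma blockOf_reachable (he : e ∈ G.edgeSet) {u v : V} (hu : u ∈ (blockOf G e).support)
    (hv : v ∈ (blockOf G e).support) : (blockOf G e).Reachable u v := by
  induction e using Sym2.ind with
  | _ x y =>
  set B := blockOf G s(x, y)
  suffices h : ∀ u ∈ B.support, B.Reachable x u from (h u hu).symm.trans (h v hv)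
  intro u hu
  obtain ⟨w, huw⟩ := (mem_support B).1 hu
  rcases (mem_edgeSet_blockOf he).1 (show s(u, w) ∈ B.edgeSet from huw)
    with h | ⟨z, c, hc, hxy, huw⟩
  · have hxyB : B.Adj x y := (mem_edgeSet_blockOf he).2 (.inl rfl)
    rcases Sym2.eq_iff.1 h with ⟨rfl, -⟩ | ⟨rfl, -⟩
    · exact .rfl
    · exact hxyB.reachable
  · have hcB : ∀ g ∈ c.edges, g ∈ B.edgeSet := fun g hg =>
      (mem_edgeSet_blockOf he).2 (.inr ⟨z, c, hc, hxy, hg⟩)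
    have hreach : ∀ t ∈ c.support, B.Reachable z t := fun t ht =>
      let ⟨q, _, _⟩ := (c.transfer B hcB).mem_support_iff_exists_append.1
        ((c.support_transfer hcB).symm ▸ ht)
      ⟨q⟩
    exact (hreach x (c.fst_mem_support_of_mem_edges hxy)).symm.trans
      (hreach u (c.fst_mem_support_of_mem_edges huw))

lemma mem_edgeSet_blockOf_of_isPath_cons (he : e ∈ G.edgeSet) {u b v : V} {hub : G.Adj u b}
    {p : G.Walk b v} (hp : (cons hub p).IsPath) (hu : u ∈ (blockOf G e).support)
    (hv : v ∈ (blockOf G e).support) : s(u, b) ∈ (blockOf G e).edgeSet := by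
  set B := blockOf G e
  by_contra hubB
  -- Follow `p` until it first returns to `B`, at `c`, and close up with a path of `B` from `c`
  -- to `u`: the resulting cycle passes through `s(u, b)` and an edge of `B`.
  obtain ⟨c, q, r, hc, rfl, hq⟩ := exists_eq_append_of_end_mem (s := B.support) p hv
  rw [← cons_append] at hp
  have hcu : c ≠ u := by
    rintro rfl
    exact ((cons_isPath_iff _ _).1 hp.of_append_left).2 q.end_mem_support
  obtain ⟨R, hR⟩ := (blockOf_reachable he hc hu).exists_isPath
  obtain ⟨w, hcw, R, rfl⟩ := not_nil_iff.1 (not_nil_of_ne (p := R) hcu)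
  have hRG : ∀ g ∈ (cons hcw R).edges, g ∈ G.edgeSet := fun g hg =>
    edgeSet_mono (blockOf_le he) ((cons hcw R).edges_subset_edgeSet hg)
  have hcyc : ((cons hub q).append ((cons hcw R).transfer G hRG)).IsCycle := by
    refine hp.of_append_left.isCycle_append_of_mem_edges (hR.transfer hRG) ?_
      (e := s(u, b)) (by simp) ?_
    · intro x hx hxR
      rw [support_transfer] at hxR
      rcases List.mem_cons.1 ((support_cons hub q) ▸ hx) with rfl | hx
      · exact .inl rfl
      · exact .inr (hq x hx (mem_support_of_mem_walk_support _ (not_nil_of_ne hcu) hxR))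
    · rw [edges_transfer]
      exact fun h => hubB ((cons hcw R).edges_subset_edgeSet h)
  exact hubB (mem_edgeSet_blockOf_of_onCommonCycle (f := s(c, w)) he hcw
    ⟨u, _, hcyc, by rw [edges_append, edges_transfer]; simp, by simp⟩)

lemma Walk.IsPath.edges_subset_blockOf (he : e ∈ G.edgeSet) {u v : V} {p : G.Walk u v}
    (hp : p.IsPath) (hu : u ∈ (blockOf G e).support) (hv : v ∈ (blockOf G e).support) :
    ∀ f ∈ p.edges, f ∈ (blockOf G e).edgeSet := by
  induction p with
  | nil => simp
  | @cons u b v hub p ih =>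
    have hubB := mem_edgeSet_blockOf_of_isPath_cons he hp hu hv
    intro f hf
    rcases List.mem_cons.1 hf with rfl | hf
    · exact hubB
    · exact ih hp.of_cons (show (blockOf G e).Adj u b from hubB).right_mem_support hv f hf

lemma Reachable.blockOf_deleteEdges (he : e ∈ G.edgeSet) {F : Set (Sym2 V)} {u v : V}
    (hu : u ∈ (blockOf G e).support) (hv : v ∈ (blockOf G e).support)
    (h : (G.deleteEdges F).Reachable u v) : ((blockOf G e).deleteEdges F).Reachable u v := by
  obtain ⟨p, hp⟩ := h.exists_isPath
  have hpF : ∀ f ∈ p.edges, f ∈ G.edgeSet ∧ f ∉ F := fun f hf => by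
    simpa using p.edges_subset_edgeSet hf
  have hpB := (hp.transfer fun f hf => (hpF f hf).1).edges_subset_blockOf he hu hv
  rw [edges_transfer] at hpB
  refine ⟨p.transfer _ fun f hf => ?_⟩
  rw [edgeSet_deleteEdges]
  exact ⟨hpB f hf, (hpF f hf).2⟩

end blockOf

variable {Γ Γ' : Sym2 V → ℕ}

lemma isMDColoring_const (G : SimpleGraph V) (c : ℕ) : IsMDColoring G fun _ => c := by
  intro u v huv
  refine ⟨c, G.edgeSet, subset_rfl, fun _ _ => rfl, ?_⟩
  rwa [deleteEdges_edgeSet, sdiff_self, reachable_bot]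

lemma IsMDColoring.anti {H : SimpleGraph V} (hΓ : IsMDColoring G Γ) (hHG : H ≤ G) :
    IsMDColoring H Γ := by
  intro u v huv
  obtain ⟨c, F, -, hF, hcut⟩ := hΓ u v huv
  refine ⟨c, F ∩ H.edgeSet, Set.inter_subset_right, fun f hf => hF f hf.1,
    fun h => hcut (h.mono fun x y hxy => ?_)⟩
  rw [deleteEdges_adj] at hxy ⊢
  exact ⟨hHG hxy.1, fun hF => hxy.2 ⟨hF, hxy.1⟩⟩

lemma IsMDColoring.of_eqOn_comp (hΓ : IsMDColoring G Γ) (φ : ℕ → ℕ)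
    (h : Set.EqOn Γ' (φ ∘ Γ) G.edgeSet) : IsMDColoring G Γ' := by
  intro u v huv
  obtain ⟨c, F, hFG, hF, hcut⟩ := hΓ u v huv
  exact ⟨φ c, F, hFG, fun f hf => by rw [h (hFG hf), Function.comp_apply, hF f hf], hcut⟩

theorem isMDColoring_of_forall_blockOf (hΓ : ∀ e ∈ G.edgeSet, IsMDColoring (blockOf G e) Γ) :
    IsMDColoring G Γ := by
  intro u v huv
  by_cases hreach : ¬ G.Reachable u v
  · exact ⟨0, ∅, Set.empty_subset _, by simp, by rwa [deleteEdges_empty]⟩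
  obtain ⟨p, hp⟩ := (not_not.1 hreach).exists_isPath
  obtain ⟨b, hub, p, rfl⟩ := not_nil_iff.1 (not_nil_of_ne (p := p) huv)
  have he : s(u, b) ∈ G.edgeSet := hub
  set B := blockOf G s(u, b)
  have hubB : B.Adj u b := (mem_edgeSet_blockOf he).2 (.inl rfl)
  -- Walking back from `v`, `c` is the first vertex of the block `B` of the first edge; the
  -- stretch `q` from `v` to `c` uses no edge of `B`, so a cut of `B` between `u` and `c` works.
  obtain ⟨c, q, r, hc, hpr, hq⟩ :=
    exists_eq_append_of_end_mem (s := B.support) p.reverse hubB.right_mem_support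
  have hcu : c ≠ u := by
    rintro rfl
    have : c ∈ p.reverse.support :=
      hpr ▸ q.support_subset_support_append_left r q.end_mem_support
    rw [support_reverse, List.mem_reverse] at this
    exact ((cons_isPath_iff _ _).1 hp).2 this
  obtain ⟨col, F, hFB, hF, hcut⟩ := hΓ _ he u c hcu.symm
  refine ⟨col, F, hFB.trans (edgeSet_mono (blockOf_le he)), hF, fun h => hcut ?_⟩
  refine Reachable.blockOf_deleteEdges he hubB.left_mem_support hc (h.trans ⟨q.transfer _ ?_⟩)
  intro f hf
  rw [edgeSet_deleteEdges]
  exact ⟨q.edges_subset_edgeSet hf,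
    fun hfF => notMem_edgeSet_of_forall_mem_support hq hf (hFB hfF)⟩

section md

variable [Finite V]

lemma bddAbove_ncard_image_of_isMDColoring (G : SimpleGraph V) :
    BddAbove {n | ∃ Γ : Sym2 V → ℕ, IsMDColoring G Γ ∧ (Γ '' G.edgeSet).ncard = n} := by
  refine ⟨G.edgeSet.ncard, ?_⟩
  rintro _ ⟨Γ, -, rfl⟩
  exact Set.ncard_image_le G.edgeSet.toFinite

lemma IsMDColoring.ncard_image_le_md (hΓ : IsMDColoring G Γ) : (Γ '' G.edgeSet).ncard ≤ md G :=
  le_csSup (bddAbove_ncard_image_of_isMDColoring G) ⟨Γ, hΓ, rfl⟩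

lemma exists_isMDColoring_ncard_image_eq_md (G : SimpleGraph V) :
    ∃ Γ : Sym2 V → ℕ, IsMDColoring G Γ ∧ (Γ '' G.edgeSet).ncard = md G := by
  refine Nat.sSup_mem ?_ (bddAbove_ncard_image_of_isMDColoring G)
  exact ⟨_, _, isMDColoring_const G 0, rfl⟩

end md

section blocks

variable {S : Finset (SimpleGraph V)}

lemma edgeSet_eq_biUnion_of_blocks (hS : ∀ H, H ∈ S ↔ ∃ e ∈ G.edgeSet, H = blockOf G e) :
    G.edgeSet = ⋃ H ∈ S, H.edgeSet := by
  ext f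
  simp only [Set.mem_iUnion, exists_prop, hS]
  constructor
  · intro hf
    exact ⟨blockOf G f, ⟨f, hf, rfl⟩, (mem_edgeSet_blockOf hf).2 (.inl rfl)⟩
  · rintro ⟨_, ⟨e, he, rfl⟩, hf⟩
    exact edgeSet_mono (blockOf_le he) hf

variable [Finite V]

theorem md_le_sum_md_of_blocks (hS : ∀ H, H ∈ S ↔ ∃ e ∈ G.edgeSet, H = blockOf G e) :
    md G ≤ ∑ H ∈ S, md H := by
  obtain ⟨Γ, hΓ, hΓmd⟩ := exists_isMDColoring_ncard_image_eq_md G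
  calc md G = (⋃ H ∈ S, Γ '' H.edgeSet).ncard := by
        rw [← hΓmd, edgeSet_eq_biUnion_of_blocks hS, Set.image_iUnion₂]
    _ ≤ ∑ H ∈ S, (Γ '' H.edgeSet).ncard := S.set_ncard_biUnion_le _
    _ ≤ ∑ H ∈ S, md H := Finset.sum_le_sum fun H hH => by
        obtain ⟨e, he, rfl⟩ := (hS H).1 hH
        exact (hΓ.anti (blockOf_le he)).ncard_image_le_md

theorem sum_md_le_md_of_blocks (hS : ∀ H, H ∈ S ↔ ∃ e ∈ G.edgeSet, H = blockOf G e) :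
    ∑ H ∈ S, md H ≤ md G := by
  choose Γ hΓ hΓmd using fun H : SimpleGraph V => exists_isMDColoring_ncard_image_eq_md H
  -- `ι` gives every block a palette of its own.
  obtain ⟨ι, hι⟩ := exists_injective_nat (SimpleGraph V × ℕ)
  set Γ' : Sym2 V → ℕ := fun f => ι (blockOf G f, Γ (blockOf G f) f)
  have hΓ' : ∀ H ∈ S, Set.EqOn Γ' ((fun n => ι (H, n)) ∘ Γ H) H.edgeSet := by
    intro H hH f hf
    obtain ⟨e, he, rfl⟩ := (hS H).1 hH
    simp only [Γ', Function.comp_apply, blockOf_eq_of_mem_edgeSet he hf]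
  have hMD : IsMDColoring G Γ' := isMDColoring_of_forall_blockOf fun e he =>
    (hΓ _).of_eqOn_comp _ (hΓ' _ ((hS _).2 ⟨e, he, rfl⟩))
  have hdisj : (S : Set (SimpleGraph V)).PairwiseDisjoint fun H => Γ' '' H.edgeSet := by
    intro H₁ hH₁ H₂ hH₂ hne
    rw [Function.onFun, (hΓ' H₁ hH₁).image_eq, (hΓ' H₂ hH₂).image_eq, Set.disjoint_left]
    rintro _ ⟨f₁, -, rfl⟩ ⟨f₂, -, h⟩
    exact hne (congrArg Prod.fst (hι h)).symm
  calc ∑ H ∈ S, md H = ∑ H ∈ S, (Γ' '' H.edgeSet).ncard := by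
        refine Finset.sum_congr rfl fun H hH => ?_
        have hιH : Function.Injective fun n => ι (H, n) := hι.comp (Prod.mk_right_injective H)
        rw [(hΓ' H hH).image_eq, Set.image_comp, Set.ncard_image_of_injective _ hιH, hΓmd]
    _ = (⋃ H ∈ S, Γ' '' H.edgeSet).ncard := by
        rw [← Finset.set_biUnion_coe, S.finite_toSet.ncard_biUnion
          (fun H _ => H.edgeSet.toFinite.image _) hdisj, finsum_mem_coe_finset]
    _ = (Γ' '' G.edgeSet).ncard := by rw [edgeSet_eq_biUnion_of_blocks hS, Set.image_iUnion₂]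
    _ ≤ md G := hMD.ncard_image_le_md

end blocks

end SimpleGraph

theorem stmt_2_general {V : Type*} [Fintype V] (G : SimpleGraph V)
    (S : Finset (SimpleGraph V))
    (hS : ∀ H, H ∈ S ↔ ∃ e ∈ G.edgeSet, H = blockOf G e) :
    md G = ∑ H ∈ S, md H :=
  le_antisymm (md_le_sum_md_of_blocks hS) (sum_md_le_md_of_blocks hS)

theorem stmt_2 {V : Type*} [Fintype V] (G : SimpleGraph V) (hG : G.Connected)
    (S : Finset (SimpleGraph V))
    (hS : ∀ H, H ∈ S ↔ ∃ e ∈ G.edgeSet, H = blockOf G e) :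
    md G = ∑ H ∈ S, md H :=
  stmt_2_general G S hS
end

section
/- If C_n is a cycle on n \geq 3 vertices, then md(C_n) = \lfloor n/2 \rfloor. -/
open SimpleGraph

/-!
Every colour class of an MD-colouring contains at least two edges as soon as no edge is a bridge:
the monochromatic cut separating the ends of an edge `e` must contain `e`, and `e` alone does not
separate them. Hence a cycle with `N` edges gets at most `⌊N/2⌋` colours.

Conversely, colour the edge `s(i, i + 1)` of the cycle by `i mod ⌊N/2⌋`. For every vertex `u`
there is a `w` at least `⌊N/2⌋` steps after `u` whose edge `s(w, w + 1)` has the colour of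
`s(u, u + 1)`; deleting these two edges cuts off the arc `u + 1, …, w`, which contains every vertex
at most `⌊N/2⌋` steps after `u`. Any other vertex `v` has `u` at most `⌊N/2⌋` steps after it, so
`u` and `v` are separated by a single colour.
-/

open Finset

namespace IsMDColoring

variable {V : Type*} {G : SimpleGraph V} {Γ : Sym2 V → ℕ}

theorem exists_ne_map_eq (hΓ : IsMDColoring G Γ) {e : Sym2 V} (he : e ∈ G.edgeSet)
    (hbr : ¬ G.IsBridge e) : ∃ f ∈ G.edgeSet, f ≠ e ∧ Γ f = Γ e := by
  induction e with
  | h u v =>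
  obtain ⟨c, F, hFG, hFc, hsep⟩ := hΓ u v (G.ne_of_adj he)
  have heF : s(u, v) ∈ F := by
    by_contra h
    exact hsep (deleteEdges_adj.2 ⟨he, h⟩).reachable
  obtain ⟨f, hfF, hfe⟩ : ∃ f ∈ F, f ≠ s(u, v) := by
    by_contra! h
    exact hsep ((not_not.1 (isBridge_iff.not.1 hbr)).mono (deleteEdges_anti h))
  exact ⟨f, hFG hfF, hfe, (hFc f hfF).trans (hFc _ heF).symm⟩

theorem two_mul_ncard_image_le [Fintype G.edgeSet] (hΓ : IsMDColoring G Γ)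
    (hG : ∀ e ∈ G.edgeSet, ¬ G.IsBridge e) : 2 * (Γ '' G.edgeSet).ncard ≤ #G.edgeFinset := by
  classical
  rw [← coe_edgeFinset, ← coe_image, Set.ncard_coe_finset]
  refine mul_card_image_le_card _ 2 fun c hc ↦ ?_
  obtain ⟨e, he, rfl⟩ := mem_image.1 hc
  rw [mem_edgeFinset] at he
  obtain ⟨f, hf, hfe, hΓf⟩ := hΓ.exists_ne_map_eq he (hG e he)
  calc 2 = #{e, f} := (card_pair hfe.symm).symm
    _ ≤ _ := card_le_card <| by
      simp [insert_subset_iff, he, hf, hΓf]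

end IsMDColoring

theorem Fin.val_add_one_mem_Ioc_iff {m : ℕ} {w c : Fin (m + 1)} (h0 : w ≠ 0) (hc : w ≠ c) :
    (w + 1).val ∈ Set.Ioc 0 c.val ↔ w.val ∈ Set.Ioc 0 c.val := by
  have hcv := Fin.val_ne_iff.2 hc
  have hc_lt := c.isLt
  rw [Fin.val_add_one]
  split_ifs with h
  · subst h
    simp only [Fin.val_last] at hcv
    simp only [Set.mem_Ioc, lt_self_iff_false, false_and, Fin.val_last, false_iff, not_and]
    omega
  · have h0' := Fin.val_ne_iff.2 h0
    simp only [Set.mem_Ioc, Fin.val_zero] at h0' ⊢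
    omega

theorem Fin.exists_le_val_sub_mod_eq {N k : ℕ} (hk : 2 * k ≤ N) (u : Fin N) :
    ∃ w : Fin N, k ≤ (w - u).val ∧ w.val % k = u.val % k := by
  by_cases h : u.val + k < N
  · refine ⟨⟨u.val + k, h⟩, ?_, Nat.add_mod_right _ _⟩
    rw [Fin.sub_val_of_le (Fin.le_def.2 (by simp))]
    simp
  · have hku : k ≤ u.val := by omega
    refine ⟨⟨u.val - k, by omega⟩, ?_, ?_⟩
    · rw [Fin.coe_sub_iff_lt.2 (Fin.lt_def.2 (by simp only; omega))]
      simp only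
      omega
    · conv_rhs => rw [← Nat.sub_add_cancel hku, Nat.add_mod_right]

namespace SimpleGraph

variable {n : ℕ}

theorem card_edgeFinset_cycleGraph : #(cycleGraph (n + 3)).edgeFinset = n + 3 := by
  have := sum_degrees_eq_twice_card_edges (cycleGraph (n + 3))
  simp only [cycleGraph_degree_three_le, sum_const, card_univ, Fintype.card_fin,
    smul_eq_mul] at this
  omega

theorem cycleGraph.mem_edges_cycle {e : Sym2 (Fin (n + 3))}
    (he : e ∈ (cycleGraph (n + 3)).edgeSet) : e ∈ (cycleGraph.cycle n).edges := by
  classical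
  suffices (cycleGraph.cycle n).edges.toFinset = (cycleGraph (n + 3)).edgeFinset by
    simpa [← List.mem_toFinset, this] using he
  refine eq_of_subset_of_card_le (fun f hf ↦ ?_) ?_
  · exact mem_edgeFinset.2 ((cycleGraph.cycle n).edges_subset_edgeSet (List.mem_toFinset.1 hf))
  · rw [card_edgeFinset_cycleGraph, List.toFinset_card_of_nodup
      cycleGraph.isCycle_cycle.isTrail.edges_nodup, Walk.length_edges, cycleGraph.length_cycle]

theorem not_isBridge_cycleGraph {e : Sym2 (Fin (n + 3))}
    (he : e ∈ (cycleGraph (n + 3)).edgeSet) : ¬ (cycleGraph (n + 3)).IsBridge e := fun hbr ↦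
  hbr.notMem_edges_of_isCycle cycleGraph.isCycle_cycle (cycleGraph.mem_edges_cycle he)

def cycleEdge {N : ℕ} [NeZero N] (i : Fin N) : Sym2 (Fin N) := s(i, i + 1)

theorem cycleGraph_adj_iff_eq_add_one {u v : Fin (n + 2)} :
    (cycleGraph (n + 2)).Adj u v ↔ u = v + 1 ∨ v = u + 1 := by
  rw [cycleGraph_adj, sub_eq_iff_eq_add', sub_eq_iff_eq_add']

theorem edgeSet_cycleGraph : (cycleGraph (n + 2)).edgeSet = Set.range cycleEdge := by
  ext e
  induction e with
  | h u v =>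
  simp only [mem_edgeSet, cycleGraph_adj_iff_eq_add_one, Set.mem_range, cycleEdge]
  constructor
  · rintro (rfl | rfl)
    exacts [⟨v, Sym2.eq_swap⟩, ⟨u, rfl⟩]
  · rintro ⟨i, hi⟩
    rcases Sym2.eq_iff.1 hi with ⟨rfl, rfl⟩ | ⟨rfl, rfl⟩
    exacts [Or.inr rfl, Or.inl rfl]

theorem cycleEdge_injective : Function.Injective (cycleEdge : Fin (n + 3) → _) := by
  intro i j h
  rcases Sym2.eq_iff.1 h with ⟨h, -⟩ | ⟨rfl, h⟩
  · exact h
  · rw [add_assoc, add_eq_left] at h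
    simp [Fin.ext_iff, Fin.val_add, Nat.mod_eq_of_lt (show 2 < n + 3 by omega)] at h

/-- `(x - a).val ∈ Set.Ioc 0 (b - a).val` says that `x` lies on the arc `a + 1, …, b`. -/
theorem not_reachable_deleteEdges_cycleEdge {a b x y : Fin (n + 2)}
    (hx : (x - a).val ∈ Set.Ioc 0 (b - a).val) (hy : (y - a).val ∉ Set.Ioc 0 (b - a).val) :
    ¬ ((cycleGraph (n + 2)).deleteEdges {cycleEdge a, cycleEdge b}).Reachable x y := by
  set S := {z : Fin (n + 2) | (z - a).val ∈ Set.Ioc 0 (b - a).val}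
  have step : ∀ z, cycleEdge z ∉ ({cycleEdge a, cycleEdge b} : Set _) → (z + 1 ∈ S ↔ z ∈ S) := by
    intro z hz
    simp only [Set.mem_insert_iff, Set.mem_singleton_iff, not_or] at hz
    simp only [S, Set.mem_ofPred_eq, add_sub_right_comm z 1 a]
    exact Fin.val_add_one_mem_Ioc_iff (sub_ne_zero.2 (ne_of_apply_ne _ hz.1))
      (fun h ↦ ne_of_apply_ne _ hz.2 (sub_left_inj.1 h))
  rintro ⟨p⟩
  obtain ⟨d, -, hd, hd'⟩ := p.exists_boundary_dart S hx hy
  obtain ⟨hadj, hne⟩ := deleteEdges_adj.1 d.adj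
  rcases cycleGraph_adj_iff_eq_add_one.1 hadj with h | h
  · rw [h] at hd hne
    rw [Sym2.eq_swap] at hne
    exact hd' ((step _ hne).1 hd)
  · rw [h] at hd' hne
    exact hd' ((step _ hne).2 hd)

noncomputable def cycleColoring (n : ℕ) : Sym2 (Fin (n + 3)) → ℕ :=
  Function.extend cycleEdge (fun i ↦ i.val % ((n + 3) / 2)) 0

theorem cycleColoring_cycleEdge (i : Fin (n + 3)) :
    cycleColoring n (cycleEdge i) = i.val % ((n + 3) / 2) :=
  cycleEdge_injective.extend_apply _ _ _

theorem ncard_image_cycleColoring :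
    (cycleColoring n '' (cycleGraph (n + 3)).edgeSet).ncard = (n + 3) / 2 := by
  have : cycleColoring n '' (cycleGraph (n + 3)).edgeSet = Finset.Iio ((n + 3) / 2) := by
    rw [edgeSet_cycleGraph, ← Set.range_comp]
    ext c
    simp only [Set.mem_range, Function.comp_apply, cycleColoring_cycleEdge, coe_Iio, Set.mem_Iio]
    constructor
    · rintro ⟨i, rfl⟩
      exact Nat.mod_lt _ (by omega)
    · intro hc
      exact ⟨⟨c, by omega⟩, Nat.mod_eq_of_lt hc⟩
  rw [this, Set.ncard_coe_finset, Nat.card_Iio]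

theorem isMDColoring_cycleColoring : IsMDColoring (cycleGraph (n + 3)) (cycleColoring n) := by
  intro u v huv
  wlog h : (v - u).val ≤ (n + 3) / 2 generalizing u v
  · obtain ⟨c, F, hFG, hFc, hsep⟩ := this v u huv.symm <| by
      rw [← neg_sub, Fin.val_neg, if_neg (sub_ne_zero.2 huv.symm)]
      omega
    exact ⟨c, F, hFG, hFc, fun hr ↦ hsep hr.symm⟩
  obtain ⟨w, hw, hcol⟩ := Fin.exists_le_val_sub_mod_eq (Nat.mul_div_le (n + 3) 2) u
  refine ⟨u.val % ((n + 3) / 2), {cycleEdge u, cycleEdge w}, ?_, ?_, fun hr ↦ ?_⟩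
  · rw [edgeSet_cycleGraph]
    rintro _ (rfl | rfl) <;> exact Set.mem_range_self _
  · rintro _ (rfl | rfl) <;> simp [cycleColoring_cycleEdge, hcol]
  · refine not_reachable_deleteEdges_cycleEdge ?_ (by simp) hr.symm
    exact ⟨Fin.pos_iff_ne_zero.2 (sub_ne_zero.2 huv.symm), h.trans hw⟩

end SimpleGraph

theorem stmt_4 (n : ℕ) (hn : 3 ≤ n) :
    md (SimpleGraph.cycleGraph n) = n / 2 := by
  obtain ⟨n, rfl⟩ := Nat.exists_eq_add_of_le' hn
  refine IsGreatest.csSup_eq ⟨⟨cycleColoring n, isMDColoring_cycleColoring,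
    ncard_image_cycleColoring⟩, ?_⟩
  rintro _ ⟨Γ, hΓ, rfl⟩
  have := hΓ.two_mul_ncard_image_le fun e ↦ not_isBridge_cycleGraph
  rw [card_edgeFinset_cycleGraph] at this
  omega
end

section
/- Let H be the union of graphs H_1, ..., H_r. If the intersection of the edge sets of all H_i is nonempty and md(H_i) = 1 for each i, then md(H) = 1. -/
open SimpleGraph

/-- Restriction of an MD-coloring to a subgraph. -/
lemma isMDColoring_mono {V : Type*} {G G' : SimpleGraph V} (h : G' ≤ G)
    {Γ : Sym2 V → ℕ} (hΓ : IsMDColoring G Γ) : IsMDColoring G' Γ := by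
  intro u v huv
  obtain ⟨c, F, hF, hmono, hreach⟩ := hΓ u v huv
  refine ⟨c, F ∩ G'.edgeSet, Set.inter_subset_right, fun e he => hmono e he.1, fun hr => hreach ?_⟩
  refine hr.mono ?_
  intro a b hab
  simp only [deleteEdges_adj] at hab ⊢
  have hE : s(a, b) ∈ G'.edgeSet := hab.1
  exact ⟨h hab.1, fun hmem => hab.2 ⟨hmem, hE⟩⟩

/-- The set whose sSup is `md` is bounded (V finite). -/
lemma md_set_bddAbove {V : Type*} [Fintype V] (G : SimpleGraph V) :
    BddAbove {n : ℕ | ∃ Γ : Sym2 V → ℕ, IsMDColoring G Γ ∧ (Γ '' G.edgeSet).ncard = n} := by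
  refine ⟨Fintype.card (Sym2 V), ?_⟩
  rintro n ⟨Γ, _, rfl⟩
  calc (Γ '' G.edgeSet).ncard ≤ G.edgeSet.ncard := Set.ncard_image_le (Set.toFinite _)
    _ ≤ Fintype.card (Sym2 V) := by
        simpa [Set.ncard_univ] using Set.ncard_le_ncard (Set.subset_univ G.edgeSet) (Set.toFinite _)

lemma md_le_one {V : Type*} [Fintype V] {G : SimpleGraph V} {Γ : Sym2 V → ℕ}
    (h : md G = 1) (hΓ : IsMDColoring G Γ) : (Γ '' G.edgeSet).ncard ≤ 1 := by
  have := le_csSup (md_set_bddAbove G) (Set.mem_setOf.mpr ⟨Γ, hΓ, rfl⟩)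
  rwa [show sSup _ = md G from rfl, h] at this

theorem stmt_7 {V : Type*} [Fintype V] {r : ℕ} (hr : 0 < r)
    (H : Fin r → SimpleGraph V)
    (hcap : (⋂ i, (H i).edgeSet).Nonempty)
    (hmd : ∀ i, md (H i) = 1) :
    md (⨆ i, H i) = 1 := by
  obtain ⟨e0, he0⟩ := hcap
  simp only [Set.mem_iInter] at he0
  set G := ⨆ i, H i with hG
  have hle : ∀ i, H i ≤ G := fun i => le_iSup H i
  have hEG : G.edgeSet = ⋃ i, (H i).edgeSet := by
    ext e
    induction e using Sym2.ind with
    | _ a b =>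
      simp only [mem_edgeSet, Set.mem_iUnion, hG, iSup_adj, mem_edgeSet]
  have he0G : e0 ∈ G.edgeSet := by
    rw [hEG]; exact Set.mem_iUnion.mpr ⟨⟨0, hr⟩, he0 _⟩
  -- every MD-coloring of G uses one color
  have key : ∀ Γ : Sym2 V → ℕ, IsMDColoring G Γ → (Γ '' G.edgeSet).ncard = 1 := by
    intro Γ hΓ
    have hconst : ∀ e ∈ G.edgeSet, Γ e = Γ e0 := by
      intro e he
      rw [hEG] at he
      obtain ⟨i, hi⟩ := Set.mem_iUnion.mp he
      have hi1 : (Γ '' (H i).edgeSet).ncard ≤ 1 :=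
        md_le_one (hmd i) (isMDColoring_mono (hle i) hΓ)
      have h1 : Γ e ∈ Γ '' (H i).edgeSet := ⟨e, hi, rfl⟩
      have h2 : Γ e0 ∈ Γ '' (H i).edgeSet := ⟨e0, he0 i, rfl⟩
      have hsub : (Γ '' (H i).edgeSet).Subsingleton :=
        (Set.ncard_le_one_iff_eq (Set.toFinite _)).mp hi1 |>.elim
          (fun h => by simp [h] at h1) (fun ⟨a, ha⟩ => by rw [ha]; exact Set.subsingleton_singleton)
      exact hsub h1 h2
    have : Γ '' G.edgeSet = {Γ e0} := by
      apply Set.eq_singleton_iff_unique_mem.mpr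
      exact ⟨⟨e0, he0G, rfl⟩, by rintro _ ⟨e, he, rfl⟩; exact hconst e he⟩
    rw [this, Set.ncard_singleton]
  -- constant coloring is an MD-coloring
  have hconstMD : IsMDColoring G (fun _ => 0) := by
    intro u v huv
    refine ⟨0, G.edgeSet, le_refl _, fun _ _ => rfl, ?_⟩
    have : G.deleteEdges G.edgeSet = ⊥ := by simp
    rw [this, reachable_bot]
    exact huv
  have h1mem : 1 ∈ {n : ℕ | ∃ Γ : Sym2 V → ℕ, IsMDColoring G Γ ∧ (Γ '' G.edgeSet).ncard = n} :=
    ⟨fun _ => 0, hconstMD, key _ hconstMD⟩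
  refine le_antisymm ?_ (le_csSup (md_set_bddAbove G) h1mem)
  apply csSup_le ⟨1, h1mem⟩
  rintro n ⟨Γ, hΓ, rfl⟩
  exact (key Γ hΓ).le
end

section
/- Let G be a connected graph and v a vertex of G that is neither a pendent vertex (degree-one vertex) nor a cut-vertex of G. Then md(G) \leq md(G - v). -/
open SimpleGraph

/-- If `F` is a set of edges whose deletion separates `a` from `w`, then any edge from the
reachable-from-`a` side to the other side belongs to `F`. -/
lemma cross_mem_aux {V : Type*} {G : SimpleGraph V} {F : Set (Sym2 V)} {a u w : V}
    (hu : (G.deleteEdges F).Reachable a u) (hw : ¬ (G.deleteEdges F).Reachable a w)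
    (hadj : G.Adj u w) : s(u, w) ∈ F := by
  by_contra h
  exact hw (hu.trans (SimpleGraph.Adj.reachable
    (by simp only [SimpleGraph.deleteEdges_adj]; exact ⟨hadj, h⟩)))

/-- A walk starting inside `S` and ending outside `S` contains a crossing edge. -/
lemma exists_cross {V' : Type*} {H : SimpleGraph V'} {S : Set V'} {a b : V'} (p : H.Walk a b)
    (ha : a ∈ S) (hb : b ∉ S) : ∃ u w, H.Adj u w ∧ u ∈ S ∧ w ∉ S := by
  induction p with
  | nil => exact absurd ha hb
  | @cons x y z h q ih =>
    by_cases hm : y ∈ S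
    · exact ih hm hb
    · exact ⟨x, y, h, ha, hm⟩

/-- Key lemma: if `v` has two distinct neighbors and `G - v` is connected, then for any
MD-coloring the color of an edge at `v` also appears on an edge avoiding `v`. -/
lemma color_appears {V : Type*} {G : SimpleGraph V} {Γ : Sym2 V → ℕ}
    (hΓ : IsMDColoring G Γ) {v x y : V} (hx : G.Adj v x) (hy : G.Adj v y) (hxy : x ≠ y)
    (hcut : (G.induce ({v}ᶜ : Set V)).Connected) :
    ∃ a b : V, a ≠ v ∧ b ≠ v ∧ G.Adj a b ∧ Γ s(a, b) = Γ s(v, x) := by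
  classical
  set H := G.induce ({v}ᶜ : Set V) with hH
  have hxv : x ≠ v := hx.ne'
  have hyv : y ≠ v := hy.ne'
  have hxc : x ∈ ({v}ᶜ : Set V) := by simpa using hxv
  have hyc : y ∈ ({v}ᶜ : Set V) := by simpa using hyv
  -- the subtype-walk crossing extraction
  have hcross : ∀ (S : Set V) (a b : ({v}ᶜ : Set V)), (a : V) ∈ S → (b : V) ∉ S →
      ∃ p q : V, p ≠ v ∧ q ≠ v ∧ G.Adj p q ∧ p ∈ S ∧ q ∉ S := by
    intro S a b haS hbS
    obtain ⟨w⟩ := hcut.preconnected a b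
    obtain ⟨p, q, hpq, hpS, hqS⟩ :=
      exists_cross (S := ((Subtype.val : ({v}ᶜ : Set V) → V) ⁻¹' S)) w haS hbS
    have hadj : G.Adj (p : V) (q : V) := hpq
    exact ⟨p, q, Set.mem_compl_singleton_iff.mp p.2, Set.mem_compl_singleton_iff.mp q.2,
      hadj, hpS, hqS⟩
  -- cut separating v and x
  obtain ⟨c, F, hFsub, hFmono, hFsep⟩ := hΓ v x (Ne.symm hxv)
  set S : Set V := {z | (G.deleteEdges F).Reachable v z} with hS
  have hvS : v ∈ S := SimpleGraph.Reachable.refl _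
  have hxS : x ∉ S := hFsep
  have hevx : s(v, x) ∈ F := cross_mem_aux (SimpleGraph.Reachable.refl _) hFsep hx
  have hc : c = Γ s(v, x) := (hFmono _ hevx).symm
  by_cases hcase : ∃ u : V, u ∈ S ∧ u ≠ v
  · -- some other vertex on v's side
    obtain ⟨u, huS, huv⟩ := hcase
    obtain ⟨p, q, hpv, hqv, hpq, hpS, hqS⟩ :=
      hcross S ⟨u, by simpa using huv⟩ ⟨x, hxc⟩ huS hxS
    have : s(p, q) ∈ F := cross_mem_aux hpS hqS hpq
    exact ⟨p, q, hpv, hqv, hpq, (hFmono _ this).trans hc⟩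
  · -- S = {v}; then the edge vy is also in F, so Γ s(v,y) = Γ s(v,x)
    push_neg at hcase
    have hyS : y ∉ S := fun h => hyv (hcase y h)
    have hevy : s(v, y) ∈ F := cross_mem_aux (SimpleGraph.Reachable.refl _) hyS hy
    have hcy : Γ s(v, y) = Γ s(v, x) := (hFmono _ hevy).trans hc
    -- cut separating x and y
    obtain ⟨c₂, F₂, hF₂sub, hF₂mono, hF₂sep⟩ := hΓ x y hxy
    set S₂ : Set V := {z | (G.deleteEdges F₂).Reachable x z} with hS₂
    have hxS₂ : x ∈ S₂ := SimpleGraph.Reachable.refl _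
    have hyS₂ : y ∉ S₂ := hF₂sep
    have hc₂ : c₂ = Γ s(v, x) := by
      by_cases hvS₂ : v ∈ S₂
      · have : s(v, y) ∈ F₂ := cross_mem_aux hvS₂ hF₂sep hy
        exact (hF₂mono _ this).symm.trans hcy
      · have : s(x, v) ∈ F₂ := cross_mem_aux hxS₂ hvS₂ hx.symm
        have := (hF₂mono _ this).symm
        rwa [Sym2.eq_swap] at this
    obtain ⟨p, q, hpv, hqv, hpq, hpS, hqS⟩ := hcross S₂ ⟨x, hxc⟩ ⟨y, hyc⟩ hxS₂ hyS₂
    have : s(p, q) ∈ F₂ := cross_mem_aux hpS hqS hpq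
    exact ⟨p, q, hpv, hqv, hpq, (hF₂mono _ this).trans hc₂⟩

/-- Mapping reachability through a vertex map that preserves adjacency. -/
lemma reach_map {V' V : Type*} {H : SimpleGraph V'} {G : SimpleGraph V} (f : V' → V)
    (hf : ∀ a b, H.Adj a b → G.Adj (f a) (f b)) {a b : V'} (h : H.Reachable a b) :
    G.Reachable (f a) (f b) :=
  SimpleGraph.Reachable.map ⟨f, fun h' => hf _ _ h'⟩ h

theorem stmt_10 {V : Type*} [Fintype V] (G : SimpleGraph V) (hG : G.Connected)
    (v : V) (hdeg : (G.neighborSet v).ncard ≠ 1)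
    (hcut : (G.induce ({v}ᶜ : Set V)).Connected) :
    md G ≤ md (G.induce ({v}ᶜ : Set V)) := by
  classical
  set H := G.induce ({v}ᶜ : Set V) with hH
  -- v has at least two distinct neighbors
  obtain ⟨u0⟩ := hcut.nonempty
  have hu0v : (u0 : V) ≠ v := Set.mem_compl_singleton_iff.mp u0.2
  have hnbr : ∃ z, G.Adj v z := by
    obtain ⟨u, hu⟩ : ∃ u : V, u ≠ v := ⟨u0, hu0v⟩
    obtain ⟨w⟩ := hG.preconnected v u
    cases w with
    | nil => exact absurd rfl hu
    | cons h _ => exact ⟨_, h⟩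
  obtain ⟨x, hx⟩ := hnbr
  have hfin : (G.neighborSet v).Finite := Set.toFinite _
  have hpos : (G.neighborSet v).ncard ≠ 0 := by
    intro h0
    exact (Set.eq_empty_iff_forall_notMem.mp ((Set.ncard_eq_zero hfin).mp h0) x) hx
  have hone : 1 < (G.neighborSet v).ncard := by omega
  obtain ⟨y, hy, hyx⟩ := Set.exists_ne_of_one_lt_ncard hone x
  have hy' : G.Adj v y := hy
  -- main bound
  have hbddH : BddAbove {n : ℕ | ∃ Γ : Sym2 ({v}ᶜ : Set V) → ℕ,
      IsMDColoring H Γ ∧ (Γ '' H.edgeSet).ncard = n} := by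
    refine ⟨(H.edgeSet).ncard, ?_⟩
    rintro n ⟨Γ, _, rfl⟩
    exact Set.ncard_image_le (Set.toFinite _)
  rw [md, md]
  apply csSup_le'
  rintro n ⟨Γ, hΓ, rfl⟩
  -- restricted coloring
  set Γ' : Sym2 ({v}ᶜ : Set V) → ℕ := fun e => Γ (Sym2.map (Subtype.val : ({v}ᶜ : Set V) → V) e) with hΓ'def
  have hmapAdj : ∀ a b : ({v}ᶜ : Set V), H.Adj a b → G.Adj (a : V) (b : V) := fun a b h => h
  have hΓ'md : IsMDColoring H Γ' := by
    intro a b hab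
    have habV : (a : V) ≠ (b : V) := fun h => hab (Subtype.ext h)
    obtain ⟨c, F, hFsub, hFmono, hFsep⟩ := hΓ (a : V) (b : V) habV
    refine ⟨c, {e ∈ H.edgeSet | Sym2.map (Subtype.val : ({v}ᶜ : Set V) → V) e ∈ F}, fun e he => he.1, ?_, ?_⟩
    · rintro e ⟨-, heF⟩
      exact hFmono _ heF
    · intro hreach
      apply hFsep
      refine reach_map (Subtype.val : ({v}ᶜ : Set V) → V) ?_ hreach
      intro p q hpq
      rw [SimpleGraph.deleteEdges_adj] at hpq ⊢
      obtain ⟨hadj, hnot⟩ := hpq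
      refine ⟨hmapAdj _ _ hadj, fun hmem => hnot ⟨hadj, by simpa using hmem⟩⟩
  -- colors of edges at v also occur away from v
  have hvq : ∀ q, G.Adj v q → Γ s(v, q) ∈ Γ' '' H.edgeSet := by
    intro q hq
    have hsecond : ∃ y', G.Adj v y' ∧ q ≠ y' := by
      by_cases hqx : q = x
      · exact ⟨y, hy', by rw [hqx]; exact hyx.symm⟩
      · exact ⟨x, hx, hqx⟩
    obtain ⟨y', hy'adj, hqy'⟩ := hsecond
    obtain ⟨a, b, hav, hbv, hab, hcol⟩ := color_appears hΓ hq hy'adj hqy' hcut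
    refine ⟨s((⟨a, Set.mem_compl_singleton_iff.mpr hav⟩ : ({v}ᶜ : Set V)), (⟨b, Set.mem_compl_singleton_iff.mpr hbv⟩ : ({v}ᶜ : Set V))), hab, ?_⟩
    simpa [hΓ'def] using hcol
  have himg : Γ' '' H.edgeSet = Γ '' G.edgeSet := by
    apply Set.Subset.antisymm
    · rintro m ⟨e, he, rfl⟩
      induction e with
      | h p q =>
        have hadj : G.Adj (p : V) (q : V) := he
        exact ⟨s((p : V), (q : V)), hadj, by simp [hΓ'def]⟩
    · rintro m ⟨e, he, rfl⟩
      induction e with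
      | h p q =>
        have hadj : G.Adj p q := he
        by_cases hpv : p = v
        · subst hpv
          exact hvq q hadj
        · by_cases hqv : q = v
          · subst hqv
            have := hvq p hadj.symm
            rwa [Sym2.eq_swap] at this
          · refine ⟨s((⟨p, Set.mem_compl_singleton_iff.mpr hpv⟩ : ({v}ᶜ : Set V)), (⟨q, Set.mem_compl_singleton_iff.mpr hqv⟩ : ({v}ᶜ : Set V))), hadj, ?_⟩
            simp [hΓ'def]
  exact le_csSup hbddH ⟨Γ', hΓ'md, by rw [himg]⟩
end

section
/- Let G be a connected graph with an MD-coloring \Gamma, and let v be a vertex of G with degree at least 2 that is not a cut-vertex. Then every color appearing on an edge incident to v also appears on some edge of G - v. -/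
open SimpleGraph

lemma helperA {V : Type*} (G : SimpleGraph V) (v : V)
    (hcut : (G.induce ({v}ᶜ : Set V)).Connected)
    (F : Set (Sym2 V)) (hF : ∀ f ∈ F, v ∈ f)
    (u w : V) (hu : u ≠ v) (hw : w ≠ v) :
    (G.deleteEdges F).Reachable u w := by
  have hmap : ∀ {a b : ({v}ᶜ : Set V)}, (G.induce ({v}ᶜ : Set V)).Adj a b →
      (G.deleteEdges F).Adj a.val b.val := by
    intro a b hab
    rw [SimpleGraph.deleteEdges_adj]
    refine ⟨hab, fun hmem => ?_⟩
    have hv := hF _ hmem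
    rw [Sym2.mem_iff] at hv
    rcases hv with h | h
    · exact a.2 h.symm
    · exact b.2 h.symm
  have hr := hcut.preconnected ⟨u, hu⟩ ⟨w, hw⟩
  exact hr.map ⟨Subtype.val, hmap⟩

theorem stmt_11 {V : Type*} [Fintype V] (G : SimpleGraph V) (hG : G.Connected)
    (Γ : Sym2 V → ℕ) (hΓ : IsMDColoring G Γ)
    (v : V) (hdeg : 2 ≤ (G.neighborSet v).ncard)
    (hcut : (G.induce ({v}ᶜ : Set V)).Connected) :
    ∀ e ∈ G.edgeSet, v ∈ e → ∃ f ∈ G.edgeSet, v ∉ f ∧ Γ f = Γ e := by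
  intro e he hve
  by_contra hno
  push_neg at hno
  set c := Γ e with hc
  -- hno : every edge of color c is incident to v
  have hno' : ∀ f ∈ G.edgeSet, Γ f = c → v ∈ f := by
    intro f hf hfc
    by_contra hvf
    exact (hno f hf hvf) hfc
  obtain ⟨w, rfl⟩ := Sym2.mem_iff_exists.mp hve
  have hadjw : G.Adj v w := G.mem_edgeSet.mp he
  have hwv : w ≠ v := hadjw.ne'
  -- Step 1: every edge incident to v has color c
  have step1 : ∀ u : V, G.Adj v u → Γ s(v, u) = c := by
    intro u hadju
    by_contra hΓu
    obtain ⟨c', F, hFsub, hFcol, hFdisc⟩ := hΓ v w hadjw.ne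
    -- edge s(v,w) must be in F
    have hin : s(v, w) ∈ F := by
      by_contra hnin
      exact hFdisc (SimpleGraph.Adj.reachable (by rw [SimpleGraph.deleteEdges_adj]; exact ⟨hadjw, hnin⟩))
    have hc' : c' = c := (hFcol _ hin).symm
    subst hc'
    -- s(v,u) not in F
    have hsnin : s(v, u) ∉ F := fun h => hΓu (hFcol _ h)
    have huv : u ≠ v := hadju.ne'
    -- all edges of F are incident to v
    have hFinc : ∀ f ∈ F, v ∈ f := fun f hf => hno' f (hFsub hf) (hFcol f hf)
    have hreach : (G.deleteEdges F).Reachable u w :=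
      helperA G v hcut F hFinc u w huv hwv
    have hvu : (G.deleteEdges F).Adj v u := by
      rw [SimpleGraph.deleteEdges_adj]; exact ⟨hadju, hsnin⟩
    exact hFdisc (hvu.reachable.trans hreach)
  -- Step 2: pick two distinct neighbors
  obtain ⟨u₁, hu₁, u₂, hu₂, hne⟩ := (Set.one_lt_ncard (G.neighborSet v).toFinite).mp (by omega)
  rw [SimpleGraph.mem_neighborSet] at hu₁ hu₂
  obtain ⟨c'', F', hFsub', hFcol', hFdisc'⟩ := hΓ u₁ u₂ hne
  by_cases hcc : c'' = c
  · subst hcc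
    have hFinc : ∀ f ∈ F', v ∈ f := fun f hf => hno' f (hFsub' hf) (hFcol' f hf)
    exact hFdisc' (helperA G v hcut F' hFinc u₁ u₂ hu₁.ne' hu₂.ne')
  · have h1 : s(v, u₁) ∉ F' := fun h => hcc (by rw [← step1 u₁ hu₁]; exact (hFcol' _ h).symm ▸ rfl)
    have h2 : s(v, u₂) ∉ F' := fun h => hcc (by rw [← step1 u₂ hu₂]; exact (hFcol' _ h).symm ▸ rfl)
    have a1 : (G.deleteEdges F').Adj u₁ v := by
      rw [SimpleGraph.deleteEdges_adj]
      exact ⟨hu₁.symm, by rwa [Sym2.eq_swap]⟩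
    have a2 : (G.deleteEdges F').Adj v u₂ := by
      rw [SimpleGraph.deleteEdges_adj]; exact ⟨hu₂, h2⟩
    exact hFdisc' (a1.reachable.trans a2.reachable)
end

section
/- If G is a 2-connected graph on n vertices, then md(G) \leq \lfloor n/2 \rfloor. -/
/-!
Grow a vertex set `S` along an ear decomposition, keeping a set `C` of colours with `2 |C| ≤ |S|`
whose edges connect `S`. Let `P` be an ear between `x ≠ y` in `S`, with `ℓ` edges and `ℓ - 1` new
vertices. The monochromatic cut separating `x` from `y` forces some edge of `P` to have a colour
in `C`. If an edge `e = uv` of `P` has a colour outside `C`, the monochromatic cut separating `u`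
from `v` contains `e`, hence has colour `Γ e` and misses the edges of colours in `C`; it must
therefore hit `P - e` too, so `Γ e` occurs twice on `P`. Hence `P` brings at most `(ℓ - 1) / 2`
new colours. Once `S` is everything, the edges of colours in `C` connect the ends of every edge,
so every colour lies in `C`.
-/

open SimpleGraph

open Finset

namespace SimpleGraph

variable {V : Type*} {G H : SimpleGraph V}

theorem Walk.reachable_of_forall_edges_mem {u v w : V} {p : G.Walk u v}
    (hp : ∀ e ∈ p.edges, e ∈ H.edgeSet) (hw : w ∈ p.support) : H.Reachable u w := by
  classical
  exact ((p.transfer H hp).takeUntil w (by rwa [Walk.support_transfer])).reachable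

theorem Walk.IsTrail.reachable_of_mem_edges {x y u v : V} {p : G.Walk x y} (hp : p.IsTrail)
    (he : s(u, v) ∈ p.edges) (hH : ∀ f ∈ p.edges, f ≠ s(u, v) → f ∈ H.edgeSet)
    (hxy : H.Reachable x y) : H.Reachable u v := by
  induction p with
  | nil => simp at he
  | @cons x c y hxc q ih =>
    rw [Walk.isTrail_cons] at hp
    rw [Walk.edges_cons, List.mem_cons] at he
    have hq : ∀ f ∈ q.edges, f ≠ s(u, v) → f ∈ H.edgeSet := fun f hf => hH f (by simp [hf])
    rcases he with he | he
    · rw [he] at hq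
      have hcy : H.Reachable c y :=
        (q.transfer H fun f hf => hq f hf (ne_of_mem_of_not_mem hf hp.2)).reachable
      have hxc' : H.Reachable x c := hxy.trans hcy.symm
      rcases Sym2.eq_iff.1 he with ⟨rfl, rfl⟩ | ⟨rfl, rfl⟩
      · exact hxc'
      · exact hxc'.symm
    · have hxc' : H.Adj x c := hH s(x, c) (by simp) (ne_of_mem_of_not_mem he hp.2).symm
      exact ih hp.1 he hq (hxc'.reachable.symm.trans hxy)

theorem Walk.exists_walk_to_first_mem {S : Set V} {u z : V} (p : G.Walk u z) (hz : z ∈ S) :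
    ∃ w ∈ S, ∃ q : G.Walk u w, q.support ⊆ p.support ∧ ∀ v ∈ q.support, v ∈ S → v = w := by
  induction p with
  | nil => exact ⟨_, hz, .nil, by simp, by simp⟩
  | @cons u c z huc p ih =>
    by_cases hu : u ∈ S
    · exact ⟨u, hu, .nil, by simp, by simp⟩
    obtain ⟨w, hw, q, hqp, hqS⟩ := ih hz
    refine ⟨w, hw, .cons huc q, ?_, ?_⟩
    · simpa using List.cons_subset_cons u hqp
    · simp only [Walk.support_cons, List.mem_cons, forall_eq_or_imp]
      exact ⟨fun h => absurd h hu, hqS⟩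

theorem Connected.exists_ear (hconn : G.Connected)
    (hcut : ∀ v : V, (G.induce ({v}ᶜ : Set V)).Connected) {S : Set V} (hS : S.Nontrivial)
    {u₀ : V} (hu₀ : u₀ ∉ S) :
    ∃ x ∈ S, ∃ y ∈ S, x ≠ y ∧ ∃ p : G.Walk x y, p.IsPath ∧ (∃ v ∈ p.support, v ∉ S) ∧
      ∀ v ∈ p.support, v ∈ S → v = x ∨ v = y := by
  classical
  obtain ⟨a, ha⟩ := hS.nonempty
  obtain ⟨d, -, hx, hu⟩ := (hconn.preconnected a u₀).some.exists_boundary_dart S ha hu₀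
  obtain ⟨z, hz, hzx⟩ := hS.exists_ne d.fst
  have hux : d.snd ≠ d.fst := fun h => hu (h ▸ hx)
  -- `d.fst ∈ S` has a neighbour `d.snd ∉ S`; a walk back into `S` avoiding `d.fst` closes the ear.
  obtain ⟨q⟩ := (hcut d.fst).preconnected ⟨d.snd, hux⟩ ⟨z, hzx⟩
  have hq : d.fst ∉ (q.map (Embedding.induce _).toHom).support := by
    rw [Walk.support_map, List.mem_map]
    rintro ⟨s, -, hs⟩
    exact s.2 hs
  obtain ⟨y, hy, r, hrq, hrS⟩ := (q.map (Embedding.induce _).toHom).exists_walk_to_first_mem hz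
  have hxr : d.fst ∉ r.bypass.support := fun h => hq (hrq (r.support_bypass_subset_support h))
  refine ⟨d.fst, hx, y, hy, fun h => hxr (h ▸ r.bypass.end_mem_support),
    .cons d.adj r.bypass, r.bypass_isPath.cons hxr, ⟨d.snd, by simp, hu⟩, ?_⟩
  intro v hv hvS
  rcases List.mem_cons.1 hv with rfl | hv
  exacts [.inl rfl, .inr (hrS v (r.support_bypass_subset_support hv) hvS)]

theorem Walk.IsPath.card_union_support [DecidableEq V] {S : Finset V} {x y : V}
    {p : G.Walk x y} (hp : p.IsPath) (hxy : x ≠ y) (hx : x ∈ S) (hy : y ∈ S)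
    (hpS : ∀ v ∈ p.support, v ∈ S → v = x ∨ v = y) :
    #(S ∪ p.support.toFinset) + 1 = #S + p.length := by
  have hsupp : #p.support.toFinset = p.length + 1 := by
    rw [List.toFinset_card_of_nodup hp.support_nodup, Walk.length_support]
  have hinter : S ∩ p.support.toFinset = {x, y} := by
    ext v
    simp only [mem_inter, List.mem_toFinset, mem_insert, mem_singleton]
    constructor
    · exact fun ⟨hvS, hvp⟩ => hpS v hvp hvS
    · rintro (rfl | rfl)
      exacts [⟨hx, p.start_mem_support⟩, ⟨hy, p.end_mem_support⟩]
  have := card_union_add_card_inter S p.support.toFinset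
  rw [hinter, card_pair hxy, hsupp] at this
  omega

section colorSubgraph

variable {α : Type*} {Γ : Sym2 V → α} {C D : Set α}

def colorSubgraph (G : SimpleGraph V) (Γ : Sym2 V → α) (C : Set α) : SimpleGraph V :=
  G.deleteEdges (Γ ⁻¹' Cᶜ)

@[simp]
theorem colorSubgraph_adj {u v : V} :
    (G.colorSubgraph Γ C).Adj u v ↔ G.Adj u v ∧ Γ s(u, v) ∈ C := by
  simp [colorSubgraph]

theorem mem_edgeSet_colorSubgraph {e : Sym2 V} :
    e ∈ (G.colorSubgraph Γ C).edgeSet ↔ e ∈ G.edgeSet ∧ Γ e ∈ C := by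
  simp [colorSubgraph]

theorem colorSubgraph_mono (h : C ⊆ D) : G.colorSubgraph Γ C ≤ G.colorSubgraph Γ D :=
  deleteEdges_anti (Set.preimage_mono (Set.compl_subset_compl.2 h))

end colorSubgraph

end SimpleGraph

theorem Finset.two_mul_card_image_sdiff_lt {α β : Type*} [DecidableEq β] {s : Finset α}
    {f : α → β} {t : Finset β} (hold : ∃ a ∈ s, f a ∈ t)
    (hpair : ∀ a ∈ s, f a ∉ t → ∃ b ∈ s, b ≠ a ∧ f b = f a) :
    2 * #(s.image f \ t) < #s := by
  set s' := s.filter (f · ∉ t)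
  have himage : s.image f \ t = s'.image f := by rw [sdiff_eq_filter, filter_image]
  have hfiber : ∀ b ∈ s'.image f, 2 ≤ #{a ∈ s' | f a = b} := by
    intro b hb
    obtain ⟨a, ha, rfl⟩ := mem_image.1 hb
    obtain ⟨ha, hat⟩ := mem_filter.1 ha
    obtain ⟨a', ha', hne, heq⟩ := hpair a ha hat
    exact one_lt_card.2 ⟨a, by simp [s', ha, hat], a', by simp [s', ha', heq, hat], hne.symm⟩
  calc 2 * #(s.image f \ t) = #(s'.image f) • 2 := by rw [himage, smul_eq_mul, mul_comm]
    _ ≤ ∑ b ∈ s'.image f, #{a ∈ s' | f a = b} := card_nsmul_le_sum _ _ 2 hfiber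
    _ = #s' := (card_eq_sum_card_image f s').symm
    _ < #s := card_lt_card (filter_ssubset.2 (by simpa using hold))

namespace IsMDColoring

variable {V : Type*} {G : SimpleGraph V} {Γ : Sym2 V → ℕ}

theorem exists_not_reachable_colorSubgraph (hΓ : IsMDColoring G Γ) {u v : V} (huv : u ≠ v) :
    ∃ c, ¬ (G.colorSubgraph Γ {c}ᶜ).Reachable u v := by
  obtain ⟨c, F, -, hF, hsep⟩ := hΓ u v huv
  refine ⟨c, fun h => hsep (h.mono (deleteEdges_anti fun e he => ?_))⟩
  simpa using hF e he

theorem not_reachable_colorSubgraph_of_adj (hΓ : IsMDColoring G Γ) {u v : V} (huv : G.Adj u v) :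
    ¬ (G.colorSubgraph Γ {Γ s(u, v)}ᶜ).Reachable u v := by
  obtain ⟨c, hc⟩ := hΓ.exists_not_reachable_colorSubgraph huv.ne
  obtain rfl : c = Γ s(u, v) := by
    by_contra hne
    exact hc (Adj.reachable (by simp [huv, Ne.symm hne]))
  exact hc

theorem exists_mem_edges_color_mem (hΓ : IsMDColoring G Γ) {C : Set ℕ} {x y : V} (hxy : x ≠ y)
    (hC : (G.colorSubgraph Γ C).Reachable x y) (p : G.Walk x y) : ∃ e ∈ p.edges, Γ e ∈ C := by
  obtain ⟨c, hc⟩ := hΓ.exists_not_reachable_colorSubgraph hxy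
  have hcC : c ∈ C := by
    by_contra hcC
    exact hc (hC.mono (colorSubgraph_mono (Set.subset_compl_singleton_iff.2 hcC)))
  by_contra! hp
  refine hc (p.transfer _ fun e he => ?_).reachable
  exact mem_edgeSet_colorSubgraph.2
    ⟨p.edges_subset_edgeSet he, fun h => hp e he (by rwa [Set.mem_singleton_iff.1 h])⟩

theorem exists_ne_color_eq (hΓ : IsMDColoring G Γ) {C : Set ℕ} {x y : V}
    (hC : (G.colorSubgraph Γ C).Reachable x y) {p : G.Walk x y} (hp : p.IsTrail) {e : Sym2 V}
    (he : e ∈ p.edges) (heC : Γ e ∉ C) : ∃ f ∈ p.edges, f ≠ e ∧ Γ f = Γ e := by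
  induction e using Sym2.ind with
  | _ u v =>
  by_contra! hf
  refine hΓ.not_reachable_colorSubgraph_of_adj (p.adj_of_mem_edges he)
    (hp.reachable_of_mem_edges he (fun f hf' hne => ?_)
      (hC.mono (colorSubgraph_mono (Set.subset_compl_singleton_iff.2 heC))))
  exact mem_edgeSet_colorSubgraph.2 ⟨p.edges_subset_edgeSet hf', hf f hf' hne⟩

theorem two_mul_card_new_colors_lt [DecidableEq V] (hΓ : IsMDColoring G Γ) {C : Finset ℕ}
    {x y : V} (hxy : x ≠ y) (hC : (G.colorSubgraph Γ C).Reachable x y) {p : G.Walk x y}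
    (hp : p.IsTrail) : 2 * #(p.edges.toFinset.image Γ \ C) < p.length := by
  rw [← Walk.length_edges, ← List.toFinset_card_of_nodup hp.edges_nodup]
  refine two_mul_card_image_sdiff_lt ?_ fun e he heC => ?_
  · simpa using hΓ.exists_mem_edges_color_mem hxy hC p
  · simpa using hΓ.exists_ne_color_eq hC hp (List.mem_toFinset.1 he) (by simpa using heC)

end IsMDColoring

section ColorSpan

variable {V : Type*} {G : SimpleGraph V} {Γ : Sym2 V → ℕ}

def IsColorSpanned (G : SimpleGraph V) (Γ : Sym2 V → ℕ) (S : Finset V) : Prop :=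
  ∃ C : Finset ℕ, 2 * #C ≤ #S ∧ ∀ u ∈ S, ∀ v ∈ S, (G.colorSubgraph Γ C).Reachable u v

theorem isColorSpanned_pair [DecidableEq V] {a b : V} (hab : G.Adj a b) :
    IsColorSpanned G Γ {a, b} := by
  refine ⟨{Γ s(a, b)}, by simp [card_pair hab.ne], ?_⟩
  have hab' : (G.colorSubgraph Γ ↑({Γ s(a, b)} : Finset ℕ)).Adj a b := by simp [hab]
  simp only [mem_insert, mem_singleton]
  rintro u (rfl | rfl) v (rfl | rfl)
  exacts [.rfl, hab'.reachable, hab'.symm.reachable, .rfl]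

theorem IsColorSpanned.union_support [DecidableEq V] (hΓ : IsMDColoring G Γ) {S : Finset V}
    (hS : IsColorSpanned G Γ S) {x y : V} (hxy : x ≠ y) (hx : x ∈ S) (hy : y ∈ S)
    {p : G.Walk x y} (hp : p.IsPath) (hpS : ∀ v ∈ p.support, v ∈ S → v = x ∨ v = y) :
    IsColorSpanned G Γ (S ∪ p.support.toFinset) := by
  obtain ⟨C, hCS, hC⟩ := hS
  refine ⟨C ∪ p.edges.toFinset.image Γ, ?_, ?_⟩
  · have hnew := hΓ.two_mul_card_new_colors_lt hxy (hC x hx y hy) hp.isTrail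
    have hverts := hp.card_union_support hxy hx hy hpS
    have hcolors := card_sdiff_add_card (p.edges.toFinset.image Γ) C
    rw [union_comm] at hcolors
    omega
  · have hreach : ∀ w ∈ S ∪ p.support.toFinset,
        (G.colorSubgraph Γ ↑(C ∪ p.edges.toFinset.image Γ)).Reachable x w := by
      intro w hw
      rcases mem_union.1 hw with hw | hw
      · exact (hC x hx w hw).mono (colorSubgraph_mono (by simp))
      · refine p.reachable_of_forall_edges_mem (fun e he => ?_) (List.mem_toFinset.1 hw)
        exact mem_edgeSet_colorSubgraph.2 ⟨p.edges_subset_edgeSet he,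
          mem_coe.2 (mem_union_right _ (mem_image_of_mem Γ (List.mem_toFinset.2 he)))⟩
    exact fun u hu v hv => (hreach u hu).symm.trans (hreach v hv)

theorem isColorSpanned_univ [Fintype V] [DecidableEq V] (hΓ : IsMDColoring G Γ)
    (hconn : G.Connected) (hcut : ∀ v : V, (G.induce ({v}ᶜ : Set V)).Connected) {S : Finset V}
    (hS : IsColorSpanned G Γ S) (hS2 : 2 ≤ #S) : IsColorSpanned G Γ univ := by
  refine strongDownwardInductionOn (p := fun S => IsColorSpanned G Γ S → 2 ≤ #S →
    IsColorSpanned G Γ univ) S (fun T ih _ hT hT2 => ?_) (card_le_univ S) hS hS2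
  by_cases hTV : T = univ
  · exact hTV ▸ hT
  obtain ⟨u₀, -, hu₀⟩ := exists_of_ssubset (ssubset_univ_iff.2 hTV)
  obtain ⟨x, hx, y, hy, hxy, p, hp, ⟨v, hvp, hvT⟩, hpT⟩ :=
    hconn.exists_ear hcut (one_lt_card_iff_nontrivial.1 hT2) (S := ↑T) hu₀
  refine ih (card_le_univ _) (ssubset_iff_of_subset subset_union_left |>.2 ⟨v, ?_, hvT⟩)
    (hT.union_support hΓ hxy hx hy hp hpT) (hT2.trans (card_le_card subset_union_left))
  exact mem_union_right _ (List.mem_toFinset.2 hvp)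

theorem IsColorSpanned.two_mul_ncard_image_le [Fintype V] (hΓ : IsMDColoring G Γ)
    (hG : IsColorSpanned G Γ univ) : 2 * (Γ '' G.edgeSet).ncard ≤ Fintype.card V := by
  obtain ⟨C, hCV, hC⟩ := hG
  have hsub : Γ '' G.edgeSet ⊆ C := by
    rintro _ ⟨e, he, rfl⟩
    induction e using Sym2.ind with
    | _ u v =>
    by_contra hcol
    exact hΓ.not_reachable_colorSubgraph_of_adj he
      ((hC u (mem_univ u) v (mem_univ v)).mono
        (colorSubgraph_mono (Set.subset_compl_singleton_iff.2 hcol)))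
  calc 2 * (Γ '' G.edgeSet).ncard ≤ 2 * #C := by
        grw [Set.ncard_le_ncard hsub C.finite_toSet, Set.ncard_coe_finset]
    _ ≤ Fintype.card V := hCV

end ColorSpan

theorem stmt_12 {V : Type*} [Fintype V] (G : SimpleGraph V)
    (hcard : 3 ≤ Fintype.card V) (hconn : G.Connected)
    (hcut : ∀ v : V, (G.induce ({v}ᶜ : Set V)).Connected) :
    md G ≤ Fintype.card V / 2 := by
  classical
  have : Nontrivial V := Fintype.one_lt_card_iff_nontrivial.1 (by omega)
  obtain ⟨a⟩ := hconn.nonempty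
  obtain ⟨b, hab⟩ := hconn.preconnected.exists_adj_of_nontrivial a
  refine csSup_le' ?_
  rintro _ ⟨Γ, hΓ, rfl⟩
  have hspan := isColorSpanned_univ hΓ hconn hcut (isColorSpanned_pair hab)
    (by rw [card_pair hab.ne])
  have := hspan.two_mul_ncard_image_le hΓ
  omega
end

section
/- md(K_{2,3}) = 1. -/
open SimpleGraph

abbrev Vt := Fin 2 ⊕ Fin 3
abbrev G23 : SimpleGraph Vt := completeBipartiteGraph (Fin 2) (Fin 3)

def classAdj (δ : Fin 2 → Fin 3 → Bool) (c : Bool) : Vt → Vt → Bool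
  | Sum.inl i, Sum.inr j => δ i j != c
  | Sum.inr j, Sum.inl i => δ i j != c
  | _, _ => false

set_option synthInstance.maxHeartbeats 1000000 in
set_option synthInstance.maxSize 512 in
set_option maxRecDepth 100000 in
set_option maxHeartbeats 4000000 in
theorem keyP : ∀ δ : Fin 2 → Fin 3 → Bool,
    (∀ u v : Vt, u ≠ v → ∃ c : Bool, ∃ S : Finset Vt, u ∈ S ∧ v ∉ S ∧
      ∀ a ∈ S, ∀ b : Vt, classAdj δ c a b = true → b ∈ S) →
    ∀ i j, δ i j = δ 0 0 := by decide

lemma walk_mem {V : Type*} {H : SimpleGraph V} {S : Set V}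
    (hS : ∀ a ∈ S, ∀ b, H.Adj a b → b ∈ S) :
    ∀ {x y : V}, H.Walk x y → x ∈ S → y ∈ S := by
  intro x y w
  induction w with
  | nil => exact id
  | cons h _ ih => exact fun hx => ih (hS _ hx _ h)

lemma not_reachable_cut {V : Type*} {H : SimpleGraph V} {u v : V}
    (h : ¬ H.Reachable u v) :
    ∃ S : Set V, u ∈ S ∧ v ∉ S ∧ ∀ a ∈ S, ∀ b, H.Adj a b → b ∈ S :=
  ⟨{w | H.Reachable u w}, Reachable.refl u, h,
    fun a ha b hab => ha.trans hab.reachable⟩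

lemma g23_adj (i : Fin 2) (j : Fin 3) : G23.Adj (Sum.inl i) (Sum.inr j) := by
  simp [completeBipartiteGraph]

lemma g23_edge_form {e : Sym2 Vt} (he : e ∈ G23.edgeSet) :
    ∃ i j, e = s(Sum.inl i, Sum.inr j) := by
  induction e using Sym2.ind with
  | _ x y =>
    rw [SimpleGraph.mem_edgeSet] at he
    rcases x with i | j <;> rcases y with i' | j'
    · simp [completeBipartiteGraph] at he
    · exact ⟨i, j', rfl⟩
    · exact ⟨i', j, Sym2.eq_swap⟩
    · simp [completeBipartiteGraph] at he

lemma g23_preconnected : G23.Preconnected := by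
  have base : ∀ (i : Fin 2) (j : Fin 3), G23.Reachable (Sum.inl i) (Sum.inr j) :=
    fun i j => (g23_adj i j).reachable
  intro u v
  rcases u with i | j <;> rcases v with i' | j'
  · exact (base i 0).trans (base i' 0).symm
  · exact base i j'
  · exact (base i' j).symm
  · exact ((base 0 j).symm).trans (base 0 j')

def Fset (δ : Fin 2 → Fin 3 → Bool) (c : Bool) : Set (Sym2 Vt) :=
  {e | ∃ i j, e = s(Sum.inl i, Sum.inr j) ∧ δ i j = c}

lemma classAdj_adj {δ : Fin 2 → Fin 3 → Bool} {c : Bool} {a b : Vt}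
    (h : classAdj δ c a b = true) : (G23.deleteEdges (Fset δ c)).Adj a b := by
  rcases a with i | j <;> rcases b with i' | j' <;> simp [classAdj] at h <;>
    rw [SimpleGraph.deleteEdges_adj]
  · refine ⟨g23_adj i j', ?_⟩
    rintro ⟨i2, j2, he, hc⟩
    rw [Sym2.eq_iff] at he
    rcases he with ⟨h1, h2⟩ | ⟨h1, h2⟩
    · cases h1; cases h2; exact h hc
    · exact absurd h1 (by simp)
  · refine ⟨(g23_adj i' j).symm, ?_⟩
    rintro ⟨i2, j2, he, hc⟩
    rw [Sym2.eq_swap, Sym2.eq_iff] at he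
    rcases he with ⟨h1, h2⟩ | ⟨h1, h2⟩
    · cases h1; cases h2; exact h hc
    · exact absurd h1 (by simp)

lemma mdcol_const {Γ : Sym2 Vt → ℕ} (h : IsMDColoring G23 Γ) :
    ∀ e ∈ G23.edgeSet, Γ e = Γ s(Sum.inl 0, Sum.inr 0) := by
  set δ : Fin 2 → Fin 3 → Bool :=
    fun i j => decide (Γ s(Sum.inl i, Sum.inr j) = Γ s(Sum.inl 0, Sum.inr 0)) with hδ
  have hyp : ∀ u v : Vt, u ≠ v → ∃ c : Bool, ∃ S : Finset Vt, u ∈ S ∧ v ∉ S ∧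
      ∀ a ∈ S, ∀ b : Vt, classAdj δ c a b = true → b ∈ S := by
    intro u v huv
    obtain ⟨c, F, hFsub, hmono, hnr⟩ := h u v huv
    rcases Set.eq_empty_or_nonempty F with rfl | ⟨e0, he0⟩
    · rw [SimpleGraph.deleteEdges_empty] at hnr
      exact absurd (g23_preconnected u v) hnr
    obtain ⟨i0, j0, he0form⟩ := g23_edge_form (hFsub he0)
    refine ⟨δ i0 j0, ?_⟩
    have hsub : F ⊆ Fset δ (δ i0 j0) := by
      intro e he
      obtain ⟨i, j, heform⟩ := g23_edge_form (hFsub he)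
      refine ⟨i, j, heform, ?_⟩
      have h1 : Γ e = c := hmono e he
      have h2 : Γ e0 = c := hmono e0 he0
      rw [hδ]
      simp only [← heform, ← he0form, h1, h2]
    have hnr' : ¬ (G23.deleteEdges (Fset δ (δ i0 j0))).Reachable u v :=
      fun r => hnr (r.mono (SimpleGraph.deleteEdges_anti hsub))
    obtain ⟨S, hu, hv, hS⟩ := not_reachable_cut hnr'
    refine ⟨(Set.toFinite S).toFinset, (Set.Finite.mem_toFinset _).2 hu,
      fun hv' => hv ((Set.Finite.mem_toFinset _).1 hv'), ?_⟩
    intro a ha b hab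
    exact (Set.Finite.mem_toFinset _).2
      (hS a ((Set.Finite.mem_toFinset _).1 ha) b (classAdj_adj hab))
  have hconst := keyP δ hyp
  have hδ00 : δ 0 0 = true := by simp [hδ]
  intro e he
  obtain ⟨i, j, heform⟩ := g23_edge_form he
  have := hconst i j
  rw [hδ00, hδ] at this
  simpa [heform] using of_decide_eq_true this

lemma e00_mem : s(Sum.inl 0, Sum.inr 0) ∈ G23.edgeSet :=
  G23.mem_edgeSet.2 (g23_adj 0 0)

theorem stmt_14 : md (completeBipartiteGraph (Fin 2) (Fin 3)) = 1 := by
  have hset : {n : ℕ | ∃ Γ : Sym2 Vt → ℕ, IsMDColoring G23 Γ ∧ (Γ '' G23.edgeSet).ncard = n}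
      = {1} := by
    ext n
    simp only [Set.mem_setOf_eq, Set.mem_singleton_iff]
    constructor
    · rintro ⟨Γ, hΓ, rfl⟩
      have himg : Γ '' G23.edgeSet = {Γ s(Sum.inl 0, Sum.inr 0)} := by
        apply Set.eq_singleton_iff_unique_mem.2
        refine ⟨⟨_, e00_mem, rfl⟩, ?_⟩
        rintro x ⟨e, he, rfl⟩
        exact mdcol_const hΓ e he
      rw [himg, Set.ncard_singleton]
    · rintro rfl
      refine ⟨fun _ => 0, ?_, ?_⟩
      · intro u v huv
        refine ⟨0, G23.edgeSet, subset_rfl, fun _ _ => rfl, ?_⟩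
        intro r
        rw [SimpleGraph.deleteEdges_edgeSet, sdiff_self] at r
        obtain ⟨w⟩ := r
        cases w with
        | nil => exact huv rfl
        | cons h _ => exact h.elim
      · rw [Set.Nonempty.image_const ⟨_, e00_mem⟩, Set.ncard_singleton]
  show md G23 = 1
  rw [md, hset, csSup_singleton]
end

section
/- If H is a connected graph and G = H \vee v is the join of H with a single additional vertex v (v joined to every vertex of H), then md(G) = 1. -/
open SimpleGraph

theorem stmt_15 {V : Type*} [Fintype V] (H : SimpleGraph V) (hH : H.Connected)
    (G : SimpleGraph (Option V))
    (hG : ∀ a b : Option V, G.Adj a b ↔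
      ((∃ x y, a = some x ∧ b = some y ∧ H.Adj x y) ∨
       (a = none ∧ ∃ y, b = some y) ∨ (b = none ∧ ∃ x, a = some x))) :
    md G = 1 := by
  obtain ⟨x0⟩ := hH.nonempty
  have hvn : ∀ x : V, G.Adj none (some x) := by
    intro x; rw [hG]; right; left; exact ⟨rfl, x, rfl⟩
  have hss : ∀ x y : V, H.Adj x y → G.Adj (some x) (some y) := by
    intro x y h; rw [hG]; left; exact ⟨x, y, rfl, rfl, h⟩
  -- any MD coloring is constant on edges
  have key : ∀ Γ : Sym2 (Option V) → ℕ, IsMDColoring G Γ →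
      ∀ e ∈ G.edgeSet, Γ e = Γ s(none, some x0) := by
    intro Γ hΓ
    have sw : ∀ a b : Option V, Γ s(a, b) = Γ s(b, a) := by
      intro a b; rw [Sym2.eq_swap]
    have cut : ∀ u w v : Option V, u ≠ v → G.Adj u w → G.Adj w v → G.Adj u v →
        ∃ c, Γ s(u, v) = c ∧ (Γ s(u, w) = c ∨ Γ s(w, v) = c) := by
      intro u w v huv h1 h2 h3
      obtain ⟨c, F, hFsub, hFc, hnr⟩ := hΓ u v huv
      have huvF : s(u, v) ∈ F := by
        by_contra h
        exact hnr (SimpleGraph.Adj.reachable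
          ((deleteEdges_adj).2 ⟨h3, h⟩))
      have h2F : s(u, w) ∈ F ∨ s(w, v) ∈ F := by
        by_contra h
        push_neg at h
        have a1 : (G.deleteEdges F).Adj u w := (deleteEdges_adj).2 ⟨h1, h.1⟩
        have a2 : (G.deleteEdges F).Adj w v := (deleteEdges_adj).2 ⟨h2, h.2⟩
        exact hnr (a1.reachable.trans a2.reachable)
      exact ⟨c, hFc _ huvF, h2F.imp (fun h => hFc _ h) (fun h => hFc _ h)⟩
    have tri : ∀ x y : V, H.Adj x y →
        Γ s(none, some x) = Γ s(none, some y) ∧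
        Γ s(some x, some y) = Γ s(none, some x) := by
      intro x y hxy
      obtain ⟨c1, e1, d1⟩ := cut (some x) none (some y)
        (by simp [hxy.ne]) (hvn x).symm (hvn y) (hss x y hxy)
      obtain ⟨c2, e2, d2⟩ := cut none (some y) (some x)
        (by simp) (hvn y) (hss y x hxy.symm) (hvn x)
      obtain ⟨c3, e3, d3⟩ := cut none (some x) (some y)
        (by simp) (hvn x) (hss x y hxy) (hvn y)
      rw [sw (some x) none] at d1
      rw [sw (some y) (some x)] at d2
      have h1 : Γ s(some x, some y) = Γ s(none, some x) ∨
          Γ s(some x, some y) = Γ s(none, some y) := by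
        rcases d1 with d | d
        · left; omega
        · right; omega
      have h2 : Γ s(none, some x) = Γ s(none, some y) ∨
          Γ s(none, some x) = Γ s(some x, some y) := by
        rcases d2 with d | d
        · left; omega
        · right; omega
      have h3 : Γ s(none, some y) = Γ s(none, some x) ∨
          Γ s(none, some y) = Γ s(some x, some y) := by
        rcases d3 with d | d
        · left; omega
        · right; omega
      rcases h1 with h1 | h1 <;> rcases h2 with h2 | h2 <;> rcases h3 with h3 | h3 <;>
        exact ⟨by omega, by omega⟩
    have spoke : ∀ x y : V, Γ s(none, some x) = Γ s(none, some y) := by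
      intro x y
      obtain ⟨w⟩ := hH.preconnected x y
      induction w with
      | nil => rfl
      | cons h p ih => exact (tri _ _ h).1.trans ih
    intro e he
    induction e using Sym2.ind with
    | _ a b =>
      rw [SimpleGraph.mem_edgeSet, hG] at he
      rcases he with ⟨x, y, ha, hb, hxy⟩ | ⟨ha, y, hb⟩ | ⟨hb, x, ha⟩
      · subst ha; subst hb
        exact ((tri x y hxy).2).trans (spoke x x0)
      · subst ha; subst hb
        exact spoke y x0
      · subst ha; subst hb
        exact (sw (some x) none).trans (spoke x x0)
  set S := {n : ℕ | ∃ Γ : Sym2 (Option V) → ℕ,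
      IsMDColoring G Γ ∧ (Γ '' G.edgeSet).ncard = n} with hS
  have hmem : (1 : ℕ) ∈ S := by
    refine ⟨fun _ => 0, ?_, ?_⟩
    · intro u v huv
      refine ⟨0, G.edgeSet, le_refl _, fun e _ => rfl, ?_⟩
      intro hr
      obtain ⟨w⟩ := hr
      cases w with
      | nil => exact huv rfl
      | cons h _ =>
        rw [deleteEdges_adj] at h
        exact h.2 h.1
    · have hne : G.edgeSet.Nonempty := ⟨s(none, some x0), (hvn x0)⟩
      rw [Set.Nonempty.image_const hne 0, Set.ncard_singleton]
  have hub : ∀ n ∈ S, n ≤ 1 := by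
    rintro n ⟨Γ, hΓ, rfl⟩
    have hsub : Γ '' G.edgeSet ⊆ {Γ s(none, some x0)} := by
      rintro c ⟨e, he, rfl⟩
      exact key Γ hΓ e he
    calc (Γ '' G.edgeSet).ncard ≤ ({Γ s(none, some x0)} : Set ℕ).ncard :=
        Set.ncard_le_ncard hsub (Set.finite_singleton _)
      _ = 1 := Set.ncard_singleton _
  have : md G = sSup S := rfl
  rw [this]
  exact le_antisymm (csSup_le ⟨1, hmem⟩ hub) (le_csSup ⟨1, fun n hn => hub n hn⟩ hmem)
end

section
/- If G is a complete multipartite graph other than a star K_{1,n-1} and other than K_{2,2}, then md(G) = 1. -/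
open SimpleGraph

namespace MDAux

variable {V : Type*} {G : SimpleGraph V} {Γ : Sym2 V → ℕ}

/-- From any MD-coloring and any pair of distinct vertices, we get a "monochromatic
side" `S`: all edges crossing `S` have the same color. -/
lemma cut_lemma (hΓ : IsMDColoring G Γ) {u v : V} (huv : u ≠ v) :
    ∃ (c : ℕ) (S : Set V), u ∈ S ∧ v ∉ S ∧
      ∀ x y, x ∈ S → y ∉ S → G.Adj x y → Γ s(x, y) = c := by
  obtain ⟨c, F, _hF, hmono, hnr⟩ := hΓ u v huv
  refine ⟨c, {w | (G.deleteEdges F).Reachable u w}, Reachable.refl u, hnr, ?_⟩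
  intro x y hx hy hadj
  by_cases h : s(x, y) ∈ F
  · exact hmono _ h
  · exact absurd (hx.trans (Adj.reachable (by rw [deleteEdges_adj]; exact ⟨hadj, h⟩))) hy

lemma pair_lemma (hΓ : IsMDColoring G Γ) {a a' b b' : V} (hbb' : b ≠ b')
    (hab : G.Adj a b) (hab' : G.Adj a b') (ha'b : G.Adj a' b) (ha'b' : G.Adj a' b')
    (h1 : Γ s(a, b) = Γ s(a, b')) (h2 : Γ s(a', b) = Γ s(a', b')) :
    Γ s(a, b) = Γ s(a', b) := by
  obtain ⟨e, T, hbT, hb'T, hcr⟩ := cut_lemma hΓ hbb'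
  have h3 : Γ s(a, b) = e := by
    by_cases ha : a ∈ T
    · rw [h1, show s(a, b') = s(b', a) from Sym2.eq_swap]
      have := hcr a b' ha hb'T hab'
      rwa [show s(a, b') = s(b', a) from Sym2.eq_swap] at this
    · have := hcr b a hbT ha hab.symm
      rwa [show s(a, b) = s(b, a) from Sym2.eq_swap]
  have h4 : Γ s(a', b) = e := by
    by_cases ha : a' ∈ T
    · rw [h2]
      exact hcr a' b' ha hb'T ha'b'
    · have := hcr b a' hbT ha ha'b.symm
      rwa [show s(a', b) = s(b, a') from Sym2.eq_swap]
  rw [h3, h4]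

lemma key_contra (hΓ : IsMDColoring G Γ) {a a' b1 b2 b3 : V} {c d : ℕ} (hcd : c ≠ d)
    (h12 : b1 ≠ b2) (h13 : b1 ≠ b3) (h23 : b2 ≠ b3)
    (hb1 : G.Adj a b1 ∧ G.Adj a' b1) (hb2 : G.Adj a b2 ∧ G.Adj a' b2)
    (hb3 : G.Adj a b3 ∧ G.Adj a' b3)
    (key : ∀ b, G.Adj a b → G.Adj a' b →
      (Γ s(a, b) = c ∧ Γ s(a', b) = d) ∨ (Γ s(a, b) = d ∧ Γ s(a', b) = c)) :
    False := by
  have P' : ∀ x y, x ≠ y → G.Adj a x → G.Adj a' x → G.Adj a y → G.Adj a' y →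
      Γ s(a, x) = Γ s(a, y) → Γ s(a', x) = Γ s(a', y) → False := by
    intro x y hxy hax ha'x hay ha'y h1 h2
    have h3 := pair_lemma hΓ hxy hax hay ha'x ha'y h1 h2
    rcases key x hax ha'x with ⟨k1, k2⟩ | ⟨k1, k2⟩
    · rw [k1, k2] at h3; exact hcd h3
    · rw [k1, k2] at h3; exact hcd h3.symm
  rcases key b1 hb1.1 hb1.2 with ⟨p1, q1⟩ | ⟨p1, q1⟩ <;>
  rcases key b2 hb2.1 hb2.2 with ⟨p2, q2⟩ | ⟨p2, q2⟩ <;>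
  rcases key b3 hb3.1 hb3.2 with ⟨p3, q3⟩ | ⟨p3, q3⟩ <;>
  first
  | exact P' b1 b2 h12 hb1.1 hb1.2 hb2.1 hb2.2 (p1.trans p2.symm) (q1.trans q2.symm)
  | exact P' b1 b3 h13 hb1.1 hb1.2 hb3.1 hb3.2 (p1.trans p3.symm) (q1.trans q3.symm)
  | exact P' b2 b3 h23 hb2.1 hb2.2 hb3.1 hb3.2 (p2.trans p3.symm) (q2.trans q3.symm)

/-- If two distinct vertices `a, a'` have at least three common neighbours, then all
edges from `a` or `a'` to common neighbours get one single color. -/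
lemma common_lemma (hΓ : IsMDColoring G Γ) {a a' b1 b2 b3 : V} (haa' : a ≠ a')
    (h12 : b1 ≠ b2) (h13 : b1 ≠ b3) (h23 : b2 ≠ b3)
    (hb1 : G.Adj a b1 ∧ G.Adj a' b1) (hb2 : G.Adj a b2 ∧ G.Adj a' b2)
    (hb3 : G.Adj a b3 ∧ G.Adj a' b3) :
    ∃ c, ∀ b, G.Adj a b → G.Adj a' b → Γ s(a, b) = c ∧ Γ s(a', b) = c := by
  obtain ⟨c, S, haS, ha'S, hcr⟩ := cut_lemma hΓ haa'
  have baseA : ∀ b, b ∉ S → G.Adj a b → Γ s(a, b) = c := fun b hb hab => hcr a b haS hb hab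
  have baseB : ∀ b, b ∈ S → G.Adj a' b → Γ s(a', b) = c := by
    intro b hb ha'b
    have := hcr b a' hb ha'S ha'b.symm
    rwa [show s(a', b) = s(b, a') from Sym2.eq_swap]
  refine ⟨c, ?_⟩
  have CA : ∀ b, G.Adj a b → G.Adj a' b → Γ s(a, b) = c := by
    intro b hab ha'b
    by_contra hd0
    have hbS : b ∈ S := by by_contra h'; exact hd0 (baseA b h' hab)
    have hb_c : Γ s(a', b) = c := baseB b hbS ha'b
    obtain ⟨d', S', haS', hbS', hcr'⟩ := cut_lemma hΓ hab.ne
    have hdd' : Γ s(a, b) = d' := hcr' a b haS' hbS' hab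
    have ha'S' : a' ∉ S' := by
      intro h'
      have h1 : Γ s(a', b) = d' := hcr' a' b h' hbS' ha'b
      exact hd0 (hdd'.trans (h1.symm.trans hb_c))
    have key : ∀ b', G.Adj a b' → G.Adj a' b' →
        (Γ s(a, b') = c ∧ Γ s(a', b') = d') ∨ (Γ s(a, b') = d' ∧ Γ s(a', b') = c) := by
      intro b' hab' ha'b'
      by_cases hb'S' : b' ∈ S'
      · have h1 : Γ s(a', b') = d' := by
          have := hcr' b' a' hb'S' ha'S' ha'b'.symm
          rwa [show s(a', b') = s(b', a') from Sym2.eq_swap]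
        have hb'S : b' ∉ S := by
          intro h'
          exact hd0 (hdd'.trans ((baseB b' h' ha'b').symm.trans h1).symm)
        exact Or.inl ⟨baseA b' hb'S hab', h1⟩
      · have h1 : Γ s(a, b') = d' := hcr' a b' haS' hb'S' hab'
        have hb'S : b' ∈ S := by
          by_contra h'
          exact hd0 (hdd'.trans ((baseA b' h' hab').symm.trans h1).symm)
        exact Or.inr ⟨h1, baseB b' hb'S ha'b'⟩
    exact key_contra hΓ (fun h => hd0 (hdd'.trans h.symm)) h12 h13 h23 hb1 hb2 hb3 key
  have CA' : ∀ b, G.Adj a b → G.Adj a' b → Γ s(a', b) = c := by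
    intro b hab ha'b
    by_contra hd0
    have hbS : b ∉ S := fun h' => hd0 (baseB b h' ha'b)
    have hb_c : Γ s(a, b) = c := baseA b hbS hab
    obtain ⟨d', S', ha'S', hbS', hcr'⟩ := cut_lemma hΓ ha'b.ne
    have hdd' : Γ s(a', b) = d' := hcr' a' b ha'S' hbS' ha'b
    have haS' : a ∉ S' := by
      intro h'
      have h1 : Γ s(a, b) = d' := hcr' a b h' hbS' hab
      exact hd0 (hdd'.trans (h1.symm.trans hb_c))
    have key : ∀ b', G.Adj a b' → G.Adj a' b' →
        (Γ s(a, b') = c ∧ Γ s(a', b') = d') ∨ (Γ s(a, b') = d' ∧ Γ s(a', b') = c) := by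
      intro b' hab' ha'b'
      by_cases hb'S' : b' ∈ S'
      · have h1 : Γ s(a, b') = d' := by
          have := hcr' b' a hb'S' haS' hab'.symm
          rwa [show s(a, b') = s(b', a) from Sym2.eq_swap]
        have hb'S : b' ∈ S := by
          by_contra h'
          exact hd0 (hdd'.trans ((baseA b' h' hab').symm.trans h1).symm)
        exact Or.inr ⟨h1, baseB b' hb'S ha'b'⟩
      · have h1 : Γ s(a', b') = d' := hcr' a' b' ha'S' hb'S' ha'b'
        have hb'S : b' ∉ S := by
          intro h'
          exact hd0 (hdd'.trans ((baseB b' h' ha'b').symm.trans h1).symm)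
        exact Or.inl ⟨baseA b' hb'S hab', h1⟩
    exact key_contra hΓ (fun h => hd0 (hdd'.trans h.symm)) h12 h13 h23 hb1 hb2 hb3 key
  exact fun b hab ha'b => ⟨CA b hab ha'b, CA' b hab ha'b⟩

lemma tri_half (hΓ : IsMDColoring G Γ) {u v w : V}
    (huv : G.Adj u v) (hvw : G.Adj v w) (huw : G.Adj u w) :
    Γ s(u, v) = Γ s(v, w) ∨ Γ s(u, v) = Γ s(u, w) := by
  obtain ⟨c, S, hu, hv, hcr⟩ := cut_lemma hΓ huv.ne
  have hc : Γ s(u, v) = c := hcr u v hu hv huv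
  by_cases hw : w ∈ S
  · left
    rw [hc, show s(v, w) = s(w, v) from Sym2.eq_swap]
    exact (hcr w v hw hv hvw.symm).symm
  · right
    rw [hc]
    exact (hcr u w hu hw huw).symm

lemma tri (hΓ : IsMDColoring G Γ) {u v w : V}
    (huv : G.Adj u v) (hvw : G.Adj v w) (huw : G.Adj u w) :
    Γ s(u, v) = Γ s(v, w) := by
  rcases tri_half hΓ huv hvw huw with h | h
  · exact h
  · rcases tri_half hΓ hvw.symm huv.symm huw.symm with h' | h'
    · rw [show s(u, v) = s(v, u) from Sym2.eq_swap, show s(v, w) = s(w, v) from Sym2.eq_swap]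
      exact h'.symm
    · rw [h, show s(u, w) = s(w, u) from Sym2.eq_swap, h'.symm,
        show s(w, v) = s(v, w) from Sym2.eq_swap]

end MDAux

open MDAux in
theorem stmt_16 {V ι : Type*} [Fintype V] (G : SimpleGraph V) (p : V → ι)
    (hmulti : ∀ a b : V, G.Adj a b ↔ p a ≠ p b)
    (hconn : G.Connected)
    (hstar : ¬ ∃ v : V, ∀ e ∈ G.edgeSet, v ∈ e)
    (hK22 : IsEmpty (G ≃g completeBipartiteGraph (Fin 2) (Fin 2))) :
    md G = 1 := by
  classical
  have hV : Nonempty V := hconn.nonempty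
  -- the edge set is nonempty
  have hE : G.edgeSet.Nonempty := by
    by_contra h
    rw [Set.not_nonempty_iff_eq_empty] at h
    exact hstar ⟨hV.some, by simp [h]⟩
  -- constancy of every MD-coloring
  have const : ∀ Γ : Sym2 V → ℕ, IsMDColoring G Γ →
      ∀ u v w z : V, G.Adj u v → G.Adj w z → Γ s(u, v) = Γ s(w, z) := by
    intro Γ hΓ
    -- adjacent-edge lemma
    have AE : ∀ u v w : V, G.Adj u v → G.Adj v w → Γ s(u, v) = Γ s(v, w) := by
      intro u v w huv hvw
      by_cases huw : u = w
      · subst huw; exact (Sym2.eq_swap ▸ rfl)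
      by_cases hadj : G.Adj u w
      · exact tri hΓ huv hvw hadj
      have hpw : p u = p w := by
        by_contra h
        exact hadj ((hmulti u w).mpr h)
      by_cases hthird : ∃ z, p z ≠ p u ∧ p z ≠ p v
      · obtain ⟨z, hz1, hz2⟩ := hthird
        have huz : G.Adj u z := (hmulti u z).mpr (Ne.symm hz1)
        have hvz : G.Adj v z := (hmulti v z).mpr (Ne.symm hz2)
        have hwz : G.Adj w z := (hmulti w z).mpr (by rw [← hpw]; exact Ne.symm hz1)
        have e1 : Γ s(u, v) = Γ s(v, z) := tri hΓ huv hvz huz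
        have e2 : Γ s(w, v) = Γ s(v, z) := tri hΓ hvw.symm hvz hwz
        rw [e1, ← e2, show s(w, v) = s(v, w) from Sym2.eq_swap]
      · push_neg at hthird
        have hall : ∀ z, p z = p u ∨ p z = p v := by
          intro z
          by_cases h : p z = p u
          · exact Or.inl h
          · exact Or.inr (hthird z h)
        have hpuv : p u ≠ p v := (hmulti u v).mp huv
        by_cases hB3 : ∃ v2 v3 : V, p v2 = p v ∧ p v3 = p v ∧ v ≠ v2 ∧ v ≠ v3 ∧ v2 ≠ v3
        · obtain ⟨v2, v3, hp2, hp3, h2, h3, h23⟩ := hB3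
          have had : ∀ b, p b = p v → G.Adj u b ∧ G.Adj w b := by
            intro b hb
            constructor
            · exact (hmulti u b).mpr (by rw [hb]; exact hpuv)
            · exact (hmulti w b).mpr (by rw [hb, ← hpw]; exact hpuv)
          obtain ⟨c, hc⟩ := common_lemma hΓ huw h2 h3 h23 (had v rfl) (had v2 hp2) (had v3 hp3)
          obtain ⟨e1, e2⟩ := hc v (had v rfl).1 (had v rfl).2
          rw [e1, ← e2, show s(w, v) = s(v, w) from Sym2.eq_swap]
        · by_cases hB2 : ∃ v', p v' = p v ∧ v' ≠ v
          · obtain ⟨v', hpv', hv'v⟩ := hB2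
            have hB : ∀ z, p z = p v → z = v ∨ z = v' := by
              intro z hz
              by_contra h
              push_neg at h
              exact hB3 ⟨v', z, hpv', hz, Ne.symm hv'v, Ne.symm h.1, fun hh => h.2 hh.symm⟩
            by_cases hA3 : ∃ u3, p u3 = p u ∧ u3 ≠ u ∧ u3 ≠ w
            · obtain ⟨u3, hpu3, hu3u, hu3w⟩ := hA3
              have had : ∀ b, p b = p u → G.Adj v b ∧ G.Adj v' b := by
                intro b hb
                constructor
                · exact (hmulti v b).mpr (by rw [hb]; exact Ne.symm hpuv)
                · exact (hmulti v' b).mpr (by rw [hb, hpv']; exact Ne.symm hpuv)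
              obtain ⟨c, hc⟩ := common_lemma hΓ (Ne.symm hv'v) huw (Ne.symm hu3u)
                (Ne.symm hu3w) (had u rfl) (had w hpw.symm) (had u3 hpu3)
              obtain ⟨e1, _⟩ := hc u (had u rfl).1 (had u rfl).2
              obtain ⟨e2, _⟩ := hc w (had w hpw.symm).1 (had w hpw.symm).2
              rw [show s(u, v) = s(v, u) from Sym2.eq_swap, e1, ← e2]
            · -- G is K_{2,2}: contradiction
              push_neg at hA3
              have hA : ∀ z, p z = p u → z = u ∨ z = w := by
                intro z hz
                by_contra h
                push_neg at h
                exact h.2 (hA3 z hz h.1)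
              exfalso
              apply hK22.false
              -- build the isomorphism
              have hvu : v ≠ u := fun h => hpuv (by rw [h])
              have hvw2 : v ≠ w := fun h => hpuv (by rw [h, hpw])
              have hv'u : v' ≠ u := fun h => hpuv (by rw [← h, hpv'])
              have hv'w : v' ≠ w := fun h => hpuv (by rw [hpw, ← h, hpv'])
              have key4 : ∀ x, x = u ∨ x = w ∨ x = v ∨ x = v' := by
                intro x
                rcases hall x with h | h
                · rcases hA x h with h' | h' <;> tauto
                · rcases hB x h with h' | h' <;> tauto
              set f : V → Fin 2 ⊕ Fin 2 := fun x =>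
                if x = u then .inl 0 else if x = w then .inl 1
                else if x = v then .inr 0 else .inr 1 with hf
              set g : Fin 2 ⊕ Fin 2 → V :=
                Sum.elim (fun i => if i = 0 then u else w)
                  (fun i => if i = 0 then v else v') with hg
              have hfu : f u = .inl 0 := by simp [hf]
              have hfw : f w = .inl 1 := by
                simp [hf, (Ne.symm huw : w ≠ u)]
              have hfv : f v = .inr 0 := by
                simp [hf, hvu, hvw2]
              have hfv' : f v' = .inr 1 := by
                simp [hf, hv'u, hv'w, hv'v]
              have h1 : p u ≠ p v := hpuv
              have h2 : p u ≠ p v' := by rw [hpv']; exact hpuv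
              have h3 : p w ≠ p v := by rw [← hpw]; exact hpuv
              have h4 : p w ≠ p v' := by rw [← hpw, hpv']; exact hpuv
              refine ⟨⟨f, g, ?_, ?_⟩, ?_⟩
              · intro x
                rcases key4 x with rfl | rfl | rfl | rfl
                · rw [hfu]; simp [hg]
                · rw [hfw]; simp [hg]
                · rw [hfv]; simp [hg]
                · rw [hfv']; simp [hg]
              · intro s
                rcases s with i | i <;> fin_cases i
                · show f (g (.inl 0)) = .inl 0
                  simp only [hg, Sum.elim_inl, if_pos rfl]
                  exact hfu
                · show f (g (.inl 1)) = .inl 1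
                  simp only [hg, Sum.elim_inl]
                  rw [if_neg (by decide : (1 : Fin 2) ≠ 0)]
                  exact hfw
                · show f (g (.inr 0)) = .inr 0
                  simp only [hg, Sum.elim_inr, if_pos rfl]
                  exact hfv
                · show f (g (.inr 1)) = .inr 1
                  simp only [hg, Sum.elim_inr]
                  rw [if_neg (by decide : (1 : Fin 2) ≠ 0)]
                  exact hfv'
              · intro x y
                rcases key4 x with rfl | rfl | rfl | rfl <;>
                rcases key4 y with rfl | rfl | rfl | rfl <;>
                simp [hfu, hfw, hfv, hfv', hmulti, completeBipartiteGraph,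
                  hpw, hpv', h1, h2, h3, h4, h1.symm, h2.symm, h3.symm, h4.symm]
          · -- the part of v is a singleton: G is a star at v
            push_neg at hB2
            exfalso
            apply hstar
            refine ⟨v, ?_⟩
            intro e he
            induction e using Sym2.ind with
            | _ x y =>
              have hxy : G.Adj x y := (mem_edgeSet G).mp he
              have hpxy : p x ≠ p y := (hmulti x y).mp hxy
              rw [Sym2.mem_iff]
              rcases hall x with hx | hx
              · rcases hall y with hy | hy
                · exact absurd (hx.trans hy.symm) hpxy
                · exact Or.inr (hB2 y hy).symm
              · exact Or.inl (hB2 x hx).symm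
    -- from the adjacent-edge lemma to full constancy
    intro u v w z huv hwz
    by_cases hvw : G.Adj v w
    · exact (AE u v w huv hvw).trans (AE v w z hvw hwz)
    · have hpvw : p v = p w := by
        by_contra h
        exact hvw ((hmulti v w).mpr h)
      have hvz : G.Adj v z := (hmulti v z).mpr (by rw [hpvw]; exact (hmulti w z).mp hwz)
      have e1 : Γ s(u, v) = Γ s(v, z) := AE u v z huv hvz
      have e2 : Γ s(v, z) = Γ s(z, w) := AE v z w hvz hwz.symm
      rw [e1, e2, show s(z, w) = s(w, z) from Sym2.eq_swap]
  -- 1 is attained (by the constant coloring)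
  have h1 : 1 ∈ {n : ℕ | ∃ Γ : Sym2 V → ℕ, IsMDColoring G Γ ∧ (Γ '' G.edgeSet).ncard = n} := by
    refine ⟨fun _ => 0, ?_, ?_⟩
    · intro u v huv
      refine ⟨0, G.edgeSet, subset_rfl, fun e _ => rfl, ?_⟩
      rw [show G.deleteEdges G.edgeSet = ⊥ by simp]
      rw [reachable_bot]
      exact huv
    · rw [Set.Nonempty.image_const hE, Set.ncard_singleton]
  -- every element of the set is at most 1
  have hub : ∀ n ∈ {n : ℕ | ∃ Γ : Sym2 V → ℕ, IsMDColoring G Γ ∧ (Γ '' G.edgeSet).ncard = n},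
      n ≤ 1 := by
    rintro n ⟨Γ, hΓ, rfl⟩
    obtain ⟨e0, he0⟩ := hE
    have hsub : Γ '' G.edgeSet ⊆ {Γ e0} := by
      rintro x ⟨e, he, rfl⟩
      induction e using Sym2.ind with
      | _ a b =>
        induction e0 using Sym2.ind with
        | _ a' b' =>
          have h := const Γ hΓ a b a' b' ((mem_edgeSet G).mp he) ((mem_edgeSet G).mp he0)
          simpa using h
    calc (Γ '' G.edgeSet).ncard ≤ ({Γ e0} : Set ℕ).ncard :=
        Set.ncard_le_ncard hsub (Set.finite_singleton _)
      _ = 1 := Set.ncard_singleton _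
  refine le_antisymm (csSup_le ⟨1, h1⟩ hub) (le_csSup ⟨1, fun n hn => hub n hn⟩ h1)
end

section
/- If every two distinct vertices of a connected graph G have at least three common neighbors, then md(G) = 1. -/
open SimpleGraph

section Aux

variable {V : Type*} {G : SimpleGraph V} {Γ : Sym2 V → ℕ} {F : Set (Sym2 V)} {d : ℕ}

private lemma col1 {u v : V} (hm : ∀ e ∈ F, Γ e = d)
    (h : ¬ (G.deleteEdges F).Reachable u v) (hadj : G.Adj u v) :
    Γ s(u, v) = d := by
  by_contra hc
  exact h (Adj.reachable ((G.deleteEdges_adj).mpr ⟨hadj, fun hF => hc (hm _ hF)⟩))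

private lemma col2 {u x v : V} (hm : ∀ e ∈ F, Γ e = d)
    (h : ¬ (G.deleteEdges F).Reachable u v) (h1 : G.Adj u x) (h2 : G.Adj x v) :
    Γ s(u, x) = d ∨ Γ s(x, v) = d := by
  by_contra hc
  push_neg at hc
  exact h ((Adj.reachable ((G.deleteEdges_adj).mpr
      ⟨h1, fun hF => hc.1 (hm _ hF)⟩)).trans
    (Adj.reachable ((G.deleteEdges_adj).mpr ⟨h2, fun hF => hc.2 (hm _ hF)⟩)))

private lemma col3 {u x y v : V} (hm : ∀ e ∈ F, Γ e = d)
    (h : ¬ (G.deleteEdges F).Reachable u v) (h1 : G.Adj u x) (h2 : G.Adj x y)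
    (h3 : G.Adj y v) :
    Γ s(u, x) = d ∨ Γ s(x, y) = d ∨ Γ s(y, v) = d := by
  by_contra hc
  push_neg at hc
  exact h (((Adj.reachable ((G.deleteEdges_adj).mpr
      ⟨h1, fun hF => hc.1 (hm _ hF)⟩)).trans
    (Adj.reachable ((G.deleteEdges_adj).mpr ⟨h2, fun hF => hc.2.1 (hm _ hF)⟩))).trans
    (Adj.reachable ((G.deleteEdges_adj).mpr ⟨h3, fun hF => hc.2.2 (hm _ hF)⟩)))

/-- In a 4-cycle `a-b-c-p-a` with `a ≠ c` and `b ≠ p`, opposite edges get the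
same color under any MD-coloring. -/
private lemma c4 (hmd : IsMDColoring G Γ) {a b c p : V}
    (hab : G.Adj a b) (hbc : G.Adj b c) (hcp : G.Adj c p) (hpa : G.Adj p a)
    (hac : a ≠ c) (hbp : b ≠ p) :
    Γ s(a, b) = Γ s(c, p) := by
  obtain ⟨d0, F0, -, hm0, hr0⟩ := hmd a c hac
  obtain ⟨d1, F1, -, hm1, hr1⟩ := hmd a b hab.ne
  obtain ⟨d2, F2, -, hm2, hr2⟩ := hmd c p hcp.ne
  obtain ⟨d3, F3, -, hm3, hr3⟩ := hmd b p hbp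
  -- cut separating a,c : paths a-b-c and c-p-a
  have h01 := col2 hm0 hr0 hab hbc
  have h02 := col2 hm0 (fun h => hr0 h.symm) hcp hpa
  -- cut separating a,b : edge a-b and path b-c-p-a
  have h11 := col1 hm1 hr1 hab
  have h12 := col3 hm1 (fun h => hr1 h.symm) hbc hcp hpa
  -- cut separating c,p : edge c-p and path p-a-b-c
  have h21 := col1 hm2 hr2 hcp
  have h22 := col3 hm2 (fun h => hr2 h.symm) hpa hab hbc
  -- cut separating b,p : paths b-c-p and p-a-b
  have h31 := col2 hm3 hr3 hbc hcp
  have h32 := col2 hm3 (fun h => hr3 h.symm) hpa hab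
  omega

end Aux

section Main

variable {V : Type*} [Fintype V] {G : SimpleGraph V} {Γ : Sym2 V → ℕ}

private lemma adj_edges (hmd : IsMDColoring G Γ)
    (hcommon : ∀ u v : V, u ≠ v → 3 ≤ (G.neighborSet u ∩ G.neighborSet v).ncard)
    {x w y : V} (hx : G.Adj x y) (hw : G.Adj w y) :
    Γ s(x, y) = Γ s(w, y) := by
  by_cases hxw : x = w
  · rw [hxw]
  · -- x and w have at least 3 common neighbors; y is one of them
    have h3 := hcommon x w hxw
    set S := G.neighborSet x ∩ G.neighborSet w with hS
    have hyS : y ∈ S := ⟨hx, hw⟩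
    have hfin : (S \ {y}).Finite := Set.toFinite _
    have hd : 1 < (S \ {y}).ncard := by
      have := Set.ncard_diff_singleton_add_one hyS (Set.toFinite S)
      omega
    obtain ⟨p, hp, q, hq, hpq⟩ := (Set.one_lt_ncard hfin).mp hd
    obtain ⟨⟨hpx, hpw⟩, hpy⟩ : (x ∈ G.neighborSet p ∧ w ∈ G.neighborSet p) ∧ p ≠ y := by
      obtain ⟨⟨h1, h2⟩, h3⟩ := hp
      exact ⟨⟨h1.symm, h2.symm⟩, h3⟩
    obtain ⟨⟨hqx, hqw⟩, hqy⟩ : (x ∈ G.neighborSet q ∧ w ∈ G.neighborSet q) ∧ q ≠ y := by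
      obtain ⟨⟨h1, h2⟩, h3⟩ := hq
      exact ⟨⟨h1.symm, h2.symm⟩, h3⟩
    -- chain of three 4-cycles
    have e1 : Γ s(x, y) = Γ s(w, p) :=
      c4 hmd hx hw.symm hpw.symm hpx hxw (fun h => hpy h.symm)
    have e2 : Γ s(w, p) = Γ s(x, q) :=
      c4 hmd hpw.symm hpx hqx.symm hqw (fun h => hxw h.symm) hpq
    have e3 : Γ s(x, q) = Γ s(w, y) :=
      c4 hmd hqx.symm hqw hw hx.symm hxw hqy
    rw [e1, e2, e3]

private lemma walk_eq (hmd : IsMDColoring G Γ)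
    (hcommon : ∀ u v : V, u ≠ v → 3 ≤ (G.neighborSet u ∩ G.neighborSet v).ncard)
    {y z : V} (pw : G.Walk y z) :
    ∀ {x w : V}, G.Adj x y → G.Adj w z → Γ s(x, y) = Γ s(w, z) := by
  induction pw with
  | nil => exact fun hx hw => adj_edges hmd hcommon hx hw
  | @cons y y' z h p ih =>
    intro x w hx hw
    have e1 : Γ s(x, y) = Γ s(y', y) := adj_edges hmd hcommon hx h.symm
    have e2 : Γ s(y', y) = Γ s(y, y') := by rw [Sym2.eq_swap]
    rw [e1, e2, ih h hw]

end Main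

theorem stmt_19 {V : Type*} [Fintype V] [Nontrivial V] (G : SimpleGraph V)
    (hconn : G.Connected)
    (hcommon : ∀ u v : V, u ≠ v → 3 ≤ (G.neighborSet u ∩ G.neighborSet v).ncard) :
    md G = 1 := by
  -- there is at least one edge
  obtain ⟨u, v, huv⟩ := exists_pair_ne V
  have hne : (G.neighborSet u ∩ G.neighborSet v).Nonempty := by
    apply Set.nonempty_of_ncard_ne_zero
    have := hcommon u v huv
    omega
  obtain ⟨t, htu, htv⟩ := hne
  have he0 : s(u, t) ∈ G.edgeSet := htu
  have hEne : G.edgeSet.Nonempty := ⟨_, he0⟩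
  -- every MD-coloring uses exactly one color
  have key : ∀ Γ : Sym2 V → ℕ, IsMDColoring G Γ → (Γ '' G.edgeSet).ncard = 1 := by
    intro Γ hmd
    have himg : Γ '' G.edgeSet = {Γ s(u, t)} := by
      apply Set.eq_singleton_iff_unique_mem.mpr
      refine ⟨⟨_, he0, rfl⟩, ?_⟩
      rintro n ⟨e, he, rfl⟩
      induction e with
      | h x y =>
        have hxy : G.Adj x y := he
        obtain ⟨pw⟩ := hconn y t
        exact walk_eq hmd hcommon pw hxy htu
    rw [himg, Set.ncard_singleton]
  -- the defining set of md G is {1}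
  have hset : {n : ℕ | ∃ Γ : Sym2 V → ℕ, IsMDColoring G Γ ∧ (Γ '' G.edgeSet).ncard = n}
      = {1} := by
    ext n
    simp only [Set.mem_setOf_eq, Set.mem_singleton_iff]
    constructor
    · rintro ⟨Γ, hmd, rfl⟩
      exact key Γ hmd
    · rintro rfl
      refine ⟨fun _ => 0, ?_, ?_⟩
      · intro a b hab
        refine ⟨0, G.edgeSet, le_refl _, fun _ _ => rfl, ?_⟩
        have : G.deleteEdges G.edgeSet = ⊥ := by
          simp only [deleteEdges_edgeSet, sdiff_self]
        rw [this]
        exact fun h => hab (reachable_bot.mp h)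
      · rw [hEne.image_const, Set.ncard_singleton]
  rw [md, hset, csSup_singleton]
end
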